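/- arXiv:2301.08701 — 2 statements merged into one kernel-verified Lean document; each statement's English description precedes it below -/
import Mathlib

section
/- Let P be a finite poset with Aut(P) cyclic of order n ≥ 1, and let g be a generator of Aut(P). Suppose ⟨g⟩ has two distinct orbits A and B, each of cardinality 4. Then either ⟨g⟩ has a third orbit (distinct from A and B) whose cardinality is divisible by 4, or ⟨g⟩ has at least two further orbits (distinct from A and B) of even cardinality. -/
/-- The orbit of `x` under the cyclic group generated by the automorphism `g`. -/
def orbit {P : Type} [PartialOrder P] (g : P ≃o P) (x : P) : Set P :=
  {y | ∃ m : ℤ, (g ^ m) x = y}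



section Helpers
variable {P : Type} [PartialOrder P] (g : P ≃o P)

lemma gadd (j k : ℤ) (x : P) : (g ^ (j + k)) x = (g ^ j) ((g ^ k) x) := by
  rw [zpow_add]; rfl

lemma g0 (x : P) : (g ^ (0:ℤ)) x = x := by rw [zpow_zero]; rfl

lemma gfix_zpow (f : P ≃o P) (x : P) (h : f x = x) : ∀ q : ℤ, (f ^ q) x = x := by
  have hinv : f⁻¹ x = x := by
    conv_lhs => rw [← h]
    exact f.symm_apply_apply x
  intro q
  induction q using Int.induction_on with
  | zero => rw [zpow_zero]; rfl
  | succ k ih =>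
      rw [show ((k:ℤ)+1) = 1 + k by ring, zpow_add, zpow_one]
      show f ((f ^ (k:ℤ)) x) = x
      rw [ih, h]
  | pred k ih =>
      rw [show (-(k:ℤ)-1) = (-1) + (-k) by ring, zpow_add, zpow_neg_one]
      show f⁻¹ ((f ^ (-(k:ℤ))) x) = x
      rw [ih, hinv]

lemma aux_fix (f : P ≃o P) (x : P) (N : ℕ) (hN : 0 < N) (hfx : (f ^ N) x = x)
    (hle : x ≤ f x) : f x = x := by
  have hmono : ∀ k : ℕ, x ≤ (f ^ k) x := by
    intro k; induction k with
    | zero => rw [pow_zero]; exact le_refl x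
    | succ k ih =>
        have h2 : (f ^ k) x ≤ (f ^ k) (f x) := (f ^ k).monotone hle
        have h3 : (f ^ (k+1)) x = (f ^ k) (f x) := by rw [pow_succ]; rfl
        rw [h3]; exact le_trans ih h2
  have hN1 : N - 1 + 1 = N := Nat.succ_pred_eq_of_pos hN
  have h4 : f x ≤ x := by
    have h6 : f x ≤ f ((f ^ (N-1)) x) := f.monotone (hmono (N-1))
    have h7 : f ((f ^ (N-1)) x) = (f ^ N) x := by
      rw [← hN1, pow_succ']; rfl
    rw [h7, hfx] at h6; exact h6
  exact le_antisymm h4 hle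

lemma orbit_eq' (x y : P) (h : ∃ m : ℤ, (g ^ m) y = x) : orbit g x = orbit g y := by
  obtain ⟨m, rfl⟩ := h
  ext z; constructor
  · rintro ⟨k, rfl⟩; exact ⟨k + m, by rw [gadd]⟩
  · rintro ⟨k, rfl⟩
    refine ⟨k - m, ?_⟩
    rw [← gadd]
    congr 1; ring

lemma orbit_self (x : P) : x ∈ orbit g x := ⟨0, g0 g x⟩

lemma period_facts (N : ℕ) (hN : 0 < N) (hfix : ∀ x : P, (g ^ N) x = x) (y : P) :
    0 < (orbit g y).ncard ∧ ∀ k : ℤ, ((g ^ k) y = y ↔ ((orbit g y).ncard : ℤ) ∣ k) := by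
  classical
  have hex : ∃ k : ℕ, 0 < k ∧ (g ^ k) y = y := ⟨N, hN, hfix y⟩
  obtain ⟨p, hppos, hpfix, hmin⟩ :
      ∃ p : ℕ, 0 < p ∧ (g ^ p) y = y ∧ ∀ k, 0 < k → k < p → (g ^ k) y ≠ y := by
    refine ⟨Nat.find hex, (Nat.find_spec hex).1, (Nat.find_spec hex).2, ?_⟩
    intro k h1 h2 hk
    exact Nat.find_min hex h2 ⟨h1, hk⟩
  have hz : (g ^ (p:ℤ)) y = y := by rw [zpow_natCast]; exact hpfix
  have hzfix : ∀ q : ℤ, (g ^ ((p:ℤ)*q)) y = y := fun q => by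
    rw [zpow_mul]; exact gfix_zpow (g ^ (p:ℤ)) y hz q
  have hppos' : (0:ℤ) < (p:ℤ) := by exact_mod_cast hppos
  have hmod : ∀ k : ℤ, (g ^ k) y = (g ^ (k % (p:ℤ))) y := by
    intro k
    conv_lhs => rw [show k = k % (p:ℤ) + (p:ℤ) * (k / (p:ℤ)) by rw [Int.emod_add_mul_ediv]]
    rw [gadd, hzfix]
  have hdvd : ∀ k : ℤ, ((g ^ k) y = y ↔ (p:ℤ) ∣ k) := by
    intro k; constructor
    · intro hk
      rw [hmod] at hk
      by_contra hnd
      have hrne : k % (p:ℤ) ≠ 0 := fun h => hnd (Int.dvd_of_emod_eq_zero h)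
      have hr0 : 0 ≤ k % (p:ℤ) := Int.emod_nonneg k (by omega)
      have hrp : k % (p:ℤ) < (p:ℤ) := Int.emod_lt_of_pos k hppos'
      have hne : (g ^ ((k % (p:ℤ)).toNat)) y ≠ y := hmin _ (by omega) (by omega)
      apply hne
      rw [← zpow_natCast, Int.toNat_of_nonneg hr0]
      exact hk
    · rintro ⟨q, rfl⟩; exact hzfix q
  have horb : orbit g y = ↑((Finset.range p).image (fun k : ℕ => (g ^ k) y)) := by
    ext z
    simp only [orbit, Set.mem_setOf_eq, Finset.coe_image, Set.mem_image, Finset.mem_coe,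
      Finset.mem_range]
    constructor
    · rintro ⟨m, rfl⟩
      refine ⟨(m % (p:ℤ)).toNat, ?_, ?_⟩
      · have hb1 := Int.emod_lt_of_pos m hppos'
        have hb2 := Int.emod_nonneg m (show (p:ℤ) ≠ 0 by omega)
        omega
      · have hb2 := Int.emod_nonneg m (show (p:ℤ) ≠ 0 by omega)
        have h1 : (g ^ ((m % (p:ℤ)).toNat)) y = (g ^ (m % (p:ℤ))) y := by
          rw [← zpow_natCast, Int.toNat_of_nonneg hb2]
        rw [h1, ← hmod]
    · rintro ⟨k, _, rfl⟩; exact ⟨(k:ℤ), by rw [zpow_natCast]⟩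
  have hcard : (orbit g y).ncard = p := by
    rw [horb, Set.ncard_coe_finset]
    have hsub : ∀ u v : ℤ, (g ^ u) y = (g ^ v) y → (g ^ (v - u)) y = y := by
      intro u v huv
      have h2 := congrArg (⇑(g ^ (-u))) huv
      rw [← gadd, ← gadd] at h2
      rw [show -u + u = 0 by ring, g0] at h2
      rw [show v - u = -u + v by ring]
      exact h2.symm
    have key : ∀ i j : ℕ, i < p → j < p → i ≤ j →
        (g ^ (i:ℕ)) y = (g ^ (j:ℕ)) y → i = j := by
      intro i j hi hj hij hzz
      by_contra hne
      have hzz' : (g ^ ((i:ℤ))) y = (g ^ ((j:ℤ))) y := by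
        rw [zpow_natCast, zpow_natCast]; exact hzz
      have hfx := hsub _ _ hzz'
      have h1 : (g ^ (j - i : ℕ)) y ≠ y := hmin (j - i) (by omega) (by omega)
      apply h1
      rw [← zpow_natCast, show ((j - i : ℕ) : ℤ) = (j:ℤ) - i by omega]
      exact hfx
    have hinj : Set.InjOn (fun k : ℕ => (g ^ k) y) (Finset.range p) := by
      intro i hi j hj hij
      simp only [Finset.coe_range, Set.mem_Iio] at hi hj
      rcases le_total i j with h|h
      · exact key i j hi hj h hij
      · exact (key j i hj hi h hij.symm).symm
    rw [Finset.card_image_of_injOn hinj, Finset.card_range]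
  rw [hcard]
  exact ⟨hppos, hdvd⟩

end Helpers

section Part2
variable {P : Type} [PartialOrder P] (g : P ≃o P)

/-- If `c` has exact period 4, powers applied to `c` agree iff exponents agree mod 4. -/
lemma pow_eq_iff (c : P) (hc4 : ∀ k : ℤ, (g ^ k) c = c ↔ (4:ℤ) ∣ k) (r s : ℤ) :
    (g ^ r) c = (g ^ s) c ↔ (4:ℤ) ∣ r - s := by
  constructor
  · intro h
    have h2 := congrArg (⇑(g ^ (-s))) h
    rw [← gadd, ← gadd, show -s + s = 0 by ring, g0] at h2
    exact (hc4 _).mp (by rw [show r - s = -s + r by ring]; exact h2)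
  · intro h
    obtain ⟨q, hq⟩ := h
    have : r = s + 4 * q := by omega
    rw [this, gadd]
    congr 1
    exact (hc4 _).mpr ⟨q, rfl⟩

lemma cross_le (x y : P) (i j : ℤ) (h : (g ^ i) x ≤ (g ^ j) y) : x ≤ (g ^ (j - i)) y := by
  have h2 := (g ^ (-i)).monotone h
  rw [← gadd, ← gadd, show -i + i = 0 by ring, g0] at h2
  rwa [show j - i = -i + j by ring]

lemma le_shift (x y : P) (s k : ℤ) (h : x ≤ (g ^ s) y) : (g ^ k) x ≤ (g ^ (k + s)) y := by
  have h2 := (g ^ k).monotone h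
  rwa [← gadd] at h2

lemma no_auto
    (hgen : ∀ φ : P ≃o P, ∃ m : ℤ, g ^ m = φ)
    (a b : P)
    (ha4 : ∀ k : ℤ, (g ^ k) a = a ↔ (4:ℤ) ∣ k)
    (hb4 : ∀ k : ℤ, (g ^ k) b = b ↔ (4:ℤ) ∣ k)
    (e : P → P) (piA piB : ℤ → ℤ)
    (heA : ∀ i : ℤ, e ((g ^ i) a) = (g ^ (piA i)) a)
    (heB : ∀ j : ℤ, e ((g ^ j) b) = (g ^ (piB j)) b)
    (heO : ∀ x : P, orbit g x ≠ orbit g a → orbit g x ≠ orbit g b → e x = x)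
    (hppA : ∀ i, (4:ℤ) ∣ piA (piA i) - i)
    (hppB : ∀ j, (4:ℤ) ∣ piB (piB j) - j)
    (hD : ∀ i j : ℤ, a ≤ (g ^ (j - i)) b → a ≤ (g ^ (piB j - piA i)) b)
    (hBA : ∀ d : ℤ, ¬ b ≤ (g ^ d) a)
    (hAsafe : ∀ y, orbit g y ≠ orbit g a → orbit g y ≠ orbit g b → ∀ i : ℤ,
      ((g ^ i) a ≤ y → (g ^ (piA i)) a ≤ y) ∧ (y ≤ (g ^ i) a → y ≤ (g ^ (piA i)) a))
    (hBsafe : ∀ y, orbit g y ≠ orbit g a → orbit g y ≠ orbit g b → ∀ j : ℤ,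
      ((g ^ j) b ≤ y → (g ^ (piB j)) b ≤ y) ∧ (y ≤ (g ^ j) b → y ≤ (g ^ (piB j)) b))
    (hbad : ¬ (4:ℤ) ∣ (piA 1 - piA 0 - 1)) : False := by
  classical
  have hclass : ∀ x : P, (∃ i : ℤ, x = (g ^ i) a) ∨ (∃ j : ℤ, x = (g ^ j) b) ∨
      (orbit g x ≠ orbit g a ∧ orbit g x ≠ orbit g b) := by
    intro x
    rcases em (orbit g x = orbit g a) with h|h
    · left
      have hx : x ∈ orbit g x := orbit_self g x
      rw [h] at hx
      obtain ⟨m, hm⟩ := hx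
      exact ⟨m, hm.symm⟩
    rcases em (orbit g x = orbit g b) with h'|h'
    · right; left
      have hx : x ∈ orbit g x := orbit_self g x
      rw [h'] at hx
      obtain ⟨m, hm⟩ := hx
      exact ⟨m, hm.symm⟩
    · right; right; exact ⟨h, h'⟩
  -- antichain: within an orbit of exact period 4, comparable elements are equal
  have hanti : ∀ (c : P), (∀ k : ℤ, (g ^ k) c = c ↔ (4:ℤ) ∣ k) →
      ∀ i i' : ℤ, (g ^ i) c ≤ (g ^ i') c → (g ^ i) c = (g ^ i') c := by
    intro c hc4 i i' hle
    have h1 : c ≤ (g ^ (i' - i)) c := cross_le g c c i i' hle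
    have h2 : (g ^ (i' - i)) c = c := by
      have hfx : ((g ^ (i' - i)) ^ (4:ℕ)) c = c := by
        rw [← zpow_natCast, ← zpow_mul]
        exact (hc4 _).mpr ⟨i' - i, by ring⟩
      exact aux_fix _ c 4 (by norm_num) hfx h1
    have hd := (pow_eq_iff g c hc4 (i' - i) 0).mp (by rw [g0]; exact h2)
    exact (pow_eq_iff g c hc4 i i').mpr (by omega)
  have hinv : ∀ x, e (e x) = x := by
    intro x
    rcases hclass x with ⟨i, rfl⟩|⟨j, rfl⟩|⟨h1, h2⟩
    · rw [heA, heA]; exact (pow_eq_iff g a ha4 _ _).mpr (hppA i)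
    · rw [heB, heB]; exact (pow_eq_iff g b hb4 _ _).mpr (hppB j)
    · rw [heO _ h1 h2, heO _ h1 h2]
  have hmono : ∀ x y : P, x ≤ y → e x ≤ e y := by
    intro x y hxy
    rcases hclass x with ⟨i, rfl⟩|⟨j, rfl⟩|⟨hx1, hx2⟩ <;>
      rcases hclass y with ⟨i', rfl⟩|⟨j', rfl⟩|⟨hy1, hy2⟩
    · -- A A
      rw [hanti a ha4 i i' hxy]
    · -- A B
      have h1 := hD i j' (cross_le g a b i j' hxy)
      have h2 := le_shift g a b _ (piA i) h1
      rw [heA, heB]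
      rwa [show piA i + (piB j' - piA i) = piB j' by ring] at h2
    · -- A O
      rw [heA, heO _ hy1 hy2]
      exact (hAsafe _ hy1 hy2 i).1 hxy
    · -- B A
      exact absurd (cross_le g b a j i' hxy) (hBA _)
    · -- B B
      rw [hanti b hb4 j j' hxy]
    · -- B O
      rw [heB, heO _ hy1 hy2]
      exact (hBsafe _ hy1 hy2 j).1 hxy
    · -- O A
      rw [heO _ hx1 hx2, heA]
      exact (hAsafe _ hx1 hx2 i').2 hxy
    · -- O B
      rw [heO _ hx1 hx2, heB]
      exact (hBsafe _ hx1 hx2 j').2 hxy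
    · -- O O
      rw [heO _ hx1 hx2, heO _ hy1 hy2]
      exact hxy
  let eqv : P ≃ P := ⟨e, e, hinv, hinv⟩
  have hiff : ∀ x y : P, eqv x ≤ eqv y ↔ x ≤ y := by
    intro x y
    constructor
    · intro h
      have h2 : e (e x) ≤ e (e y) := hmono _ _ h
      rwa [hinv x, hinv y] at h2
    · exact hmono x y
  let φ : P ≃o P := ⟨eqv, hiff _ _⟩
  obtain ⟨t, ht⟩ := hgen φ
  have hφ : ∀ x : P, (g ^ t) x = e x := by
    intro x
    rw [ht]; rfl
  have h0 : (g ^ t) a = (g ^ (piA 0)) a := by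
    have := hφ a
    rw [show e a = (g ^ (piA 0)) a by rw [← heA 0, g0]] at this
    exact this
  have h1 : (g ^ (t + 1)) a = (g ^ (piA 1)) a := by
    rw [gadd, show (g ^ (1:ℤ)) a = (g ^ (1:ℤ)) a from rfl]
    rw [hφ ((g ^ (1:ℤ)) a), heA 1]
  have d0 := (pow_eq_iff g a ha4 t (piA 0)).mp h0
  have d1 := (pow_eq_iff g a ha4 (t+1) (piA 1)).mp h1
  exact hbad (by omega)

end Part2

section Part3
variable {P : Type} [PartialOrder P] (g : P ≃o P)

def sE (i : ℤ) : ℤ := i + 2*((i+1) % 2)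
def sO (i : ℤ) : ℤ := i + 2*(i % 2)

lemma iter_le (ℓ : ℤ) (y : P) (hy : (g ^ ℓ) y = y) (c : P) (i : ℤ) (k : ℕ) :
    ((g ^ i) c ≤ y → (g ^ (i + k*ℓ)) c ≤ y) ∧ (y ≤ (g ^ i) c → y ≤ (g ^ (i + k*ℓ)) c) := by
  induction k with
  | zero =>
      constructor <;> intro h <;>
        · rw [show i + ((0:ℕ):ℤ)*ℓ = i by push_cast; ring]
          exact h
  | succ k ih =>
      have hstep : ∀ j : ℤ, ((g ^ j) c ≤ y → (g ^ (j+ℓ)) c ≤ y) ∧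
          (y ≤ (g ^ j) c → y ≤ (g ^ (j+ℓ)) c) := by
        intro j
        constructor
        · intro h
          have h2 := (g ^ ℓ).monotone h
          rw [← gadd, hy] at h2
          rwa [show j + ℓ = ℓ + j by ring]
        · intro h
          have h2 := (g ^ ℓ).monotone h
          rw [← gadd, hy] at h2
          rwa [show j + ℓ = ℓ + j by ring]
      constructor
      · intro h
        have h2 := (hstep (i + k*ℓ)).1 (ih.1 h)
        rwa [show i + ((k:ℕ)+1:ℕ)*ℓ = i + (k:ℕ)*ℓ + ℓ by push_cast; ring]
      · intro h
        have h2 := (hstep (i + k*ℓ)).2 (ih.2 h)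
        rwa [show i + ((k:ℕ)+1:ℕ)*ℓ = i + (k:ℕ)*ℓ + ℓ by push_cast; ring]

lemma step_two (c : P) (hc4 : ∀ k : ℤ, (g ^ k) c = c ↔ (4:ℤ) ∣ k)
    (y : P) (L : ℕ) (hLfix : (g ^ (L:ℤ)) y = y)
    (hL2 : L % 4 = 1 ∨ L % 4 = 2 ∨ L % 4 = 3) (i : ℤ) :
    ((g ^ i) c ≤ y → (g ^ (i+2)) c ≤ y) ∧ (y ≤ (g ^ i) c → y ≤ (g ^ (i+2)) c) := by
  have hk : ∃ k : ℕ, (4:ℤ) ∣ ((k:ℤ) * (L:ℤ) - 2) := by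
    rcases em (L % 4 = 2) with h|h
    · exact ⟨1, by push_cast; omega⟩
    · exact ⟨2, by push_cast; omega⟩
  obtain ⟨k, hk⟩ := hk
  have heq : (g ^ (i + k*(L:ℤ))) c = (g ^ (i+2)) c :=
    (pow_eq_iff g c hc4 _ _).mpr (by omega)
  constructor
  · intro h
    have h2 := (iter_le g (L:ℤ) y hLfix c i k).1 h
    rwa [heq] at h2
  · intro h
    have h2 := (iter_le g (L:ℤ) y hLfix c i k).2 h
    rwa [heq] at h2

lemma step_one (c : P) (hc4 : ∀ k : ℤ, (g ^ k) c = c ↔ (4:ℤ) ∣ k)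
    (y : P) (L : ℕ) (hLfix : (g ^ (L:ℤ)) y = y)
    (hL1 : L % 4 = 1 ∨ L % 4 = 3) (i : ℤ) :
    ((g ^ i) c ≤ y → (g ^ (i+1)) c ≤ y) ∧ (y ≤ (g ^ i) c → y ≤ (g ^ (i+1)) c) := by
  have hk : ∃ k : ℕ, (4:ℤ) ∣ ((k:ℤ) * (L:ℤ) - 1) := by
    rcases hL1 with h|h
    · exact ⟨1, by push_cast; omega⟩
    · exact ⟨3, by push_cast; omega⟩
  obtain ⟨k, hk⟩ := hk
  have heq : (g ^ (i + k*(L:ℤ))) c = (g ^ (i+1)) c :=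
    (pow_eq_iff g c hc4 _ _).mpr (by omega)
  constructor
  · intro h
    have h2 := (iter_le g (L:ℤ) y hLfix c i k).1 h
    rwa [heq] at h2
  · intro h
    have h2 := (iter_le g (L:ℤ) y hLfix c i k).2 h
    rwa [heq] at h2

lemma q_ext (Q : ℤ → Prop) (h4 : ∀ i j : ℤ, (4:ℤ) ∣ i - j → Q i → Q j)
    (hstep : ∀ i, Q i → Q (i+1)) (i j : ℤ) (hQi : Q i) : Q j := by
  have hn : ∀ k : ℕ, Q (i + k) := by
    intro k; induction k with
    | zero =>
        have h0 : i + ((0:ℕ):ℤ) = i := by push_cast; ring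
        rw [h0]; exact hQi
    | succ k ih =>
        have := hstep _ ih
        rwa [show i + (k:ℤ) + 1 = i + ((k+1 : ℕ):ℤ) by push_cast; ring] at this
  have h1 := hn ((j - i) % 4).toNat
  exact h4 _ _ (by omega) h1

lemma q_class2 (Q : ℤ → Prop) (h4 : ∀ i j : ℤ, (4:ℤ) ∣ i - j → Q i → Q j)
    (h2 : ∀ i, Q i → Q (i+2)) (i0 : ℤ) (hp : Q i0) (hq : ¬ Q (i0+1)) (i : ℤ) :
    Q i ↔ (2:ℤ) ∣ (i - i0) := by
  constructor
  · intro hQ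
    by_contra hodd
    rcases em ((4:ℤ) ∣ i - (i0+1)) with h|h
    · exact hq (h4 _ _ h hQ)
    · have h3 : (4:ℤ) ∣ (i + 2) - (i0 + 1) := by omega
      exact hq (h4 _ _ h3 (h2 _ hQ))
  · intro he
    rcases em ((4:ℤ) ∣ i - i0) with h|h
    · exact h4 _ _ (by omega) hp
    · exact h4 _ _ (by omega) (h2 _ hp)

end Part3

section Part4
variable {P : Type} [PartialOrder P] (g : P ≃o P)

lemma inst1 (hgen : ∀ φ : P ≃o P, ∃ m : ℤ, g ^ m = φ) (a b : P)
    (ha4 : ∀ k : ℤ, (g ^ k) a = a ↔ (4:ℤ) ∣ k)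
    (hb4 : ∀ k : ℤ, (g ^ k) b = b ↔ (4:ℤ) ∣ k)
    (hAB : ∀ i j : ℤ, (g ^ i) a ≠ (g ^ j) b)
    (hBA : ∀ d : ℤ, ¬ b ≤ (g ^ d) a)
    (hAsafe : ∀ y, orbit g y ≠ orbit g a → orbit g y ≠ orbit g b → ∀ i : ℤ,
      ((g ^ i) a ≤ y → (g ^ (sE i)) a ≤ y) ∧ (y ≤ (g ^ i) a → y ≤ (g ^ (sE i)) a))
    (hBsafe : ∀ y, orbit g y ≠ orbit g a → orbit g y ≠ orbit g b → ∀ j : ℤ,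
      ((g ^ j) b ≤ y → (g ^ (sE j)) b ≤ y) ∧ (y ≤ (g ^ j) b → y ≤ (g ^ (sE j)) b))
    (hD : ∀ i j : ℤ, a ≤ (g ^ (j - i)) b → a ≤ (g ^ (sE j - sE i)) b) : False := by
  classical
  have hAne : ∀ r s : ℤ, ¬ (4:ℤ) ∣ (r-s) → (g^r) a ≠ (g^s) a :=
    fun r s h he => h ((pow_eq_iff g a ha4 r s).mp he)
  have hBne : ∀ r s : ℤ, ¬ (4:ℤ) ∣ (r-s) → (g^r) b ≠ (g^s) b :=
    fun r s h he => h ((pow_eq_iff g b hb4 r s).mp he)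
  have hBAne : ∀ r s : ℤ, (g^r) b ≠ (g^s) a := fun r s h => hAB s r h.symm
  have hacong : ∀ r s : ℤ, (4:ℤ) ∣ r - s → (g^r) a = (g^s) a :=
    fun r s h => (pow_eq_iff g a ha4 r s).mpr h
  have hbcong : ∀ r s : ℤ, (4:ℤ) ∣ r - s → (g^r) b = (g^s) b :=
    fun r s h => (pow_eq_iff g b hb4 r s).mpr h
  refine no_auto g hgen a b ha4 hb4
    (fun x => Equiv.swap ((g^(0:ℤ)) b) ((g^(2:ℤ)) b)
      (Equiv.swap ((g^(0:ℤ)) a) ((g^(2:ℤ)) a) x)) sE sE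
    ?_ ?_ ?_ ?_ ?_ hD hBA hAsafe hBsafe ?_
  · intro i
    beta_reduce
    have hsE : sE i = i + 2*((i+1) % 2) := rfl
    have h4 : i % 4 = 0 ∨ i % 4 = 1 ∨ i % 4 = 2 ∨ i % 4 = 3 := by omega
    rcases h4 with h|h|h|h
    · rw [hacong i 0 (by omega), Equiv.swap_apply_left,
        Equiv.swap_apply_of_ne_of_ne (hAB 2 0) (hAB 2 2)]
      exact hacong 2 (sE i) (by omega)
    · rw [hacong i 1 (by omega),
        Equiv.swap_apply_of_ne_of_ne (hAne 1 0 (by omega)) (hAne 1 2 (by omega)),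
        Equiv.swap_apply_of_ne_of_ne (hAB 1 0) (hAB 1 2)]
      exact hacong 1 (sE i) (by omega)
    · rw [hacong i 2 (by omega), Equiv.swap_apply_right,
        Equiv.swap_apply_of_ne_of_ne (hAB 0 0) (hAB 0 2)]
      exact hacong 0 (sE i) (by omega)
    · rw [hacong i 3 (by omega),
        Equiv.swap_apply_of_ne_of_ne (hAne 3 0 (by omega)) (hAne 3 2 (by omega)),
        Equiv.swap_apply_of_ne_of_ne (hAB 3 0) (hAB 3 2)]
      exact hacong 3 (sE i) (by omega)
  · intro j
    beta_reduce
    have hsE : sE j = j + 2*((j+1) % 2) := rfl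
    have h4 : j % 4 = 0 ∨ j % 4 = 1 ∨ j % 4 = 2 ∨ j % 4 = 3 := by omega
    rcases h4 with h|h|h|h
    · rw [hbcong j 0 (by omega),
        Equiv.swap_apply_of_ne_of_ne (hBAne 0 0) (hBAne 0 2),
        Equiv.swap_apply_left]
      exact hbcong 2 (sE j) (by omega)
    · rw [hbcong j 1 (by omega),
        Equiv.swap_apply_of_ne_of_ne (hBAne 1 0) (hBAne 1 2),
        Equiv.swap_apply_of_ne_of_ne (hBne 1 0 (by omega)) (hBne 1 2 (by omega))]
      exact hbcong 1 (sE j) (by omega)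
    · rw [hbcong j 2 (by omega),
        Equiv.swap_apply_of_ne_of_ne (hBAne 2 0) (hBAne 2 2),
        Equiv.swap_apply_right]
      exact hbcong 0 (sE j) (by omega)
    · rw [hbcong j 3 (by omega),
        Equiv.swap_apply_of_ne_of_ne (hBAne 3 0) (hBAne 3 2),
        Equiv.swap_apply_of_ne_of_ne (hBne 3 0 (by omega)) (hBne 3 2 (by omega))]
      exact hbcong 3 (sE j) (by omega)
  · intro x h1 h2
    beta_reduce
    have hna : ∀ r : ℤ, x ≠ (g^r) a := by
      intro r he
      exact h1 (by rw [he]; exact orbit_eq' g _ a ⟨r, rfl⟩)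
    have hnb : ∀ r : ℤ, x ≠ (g^r) b := by
      intro r he
      exact h2 (by rw [he]; exact orbit_eq' g _ b ⟨r, rfl⟩)
    rw [Equiv.swap_apply_of_ne_of_ne (hna 0) (hna 2),
      Equiv.swap_apply_of_ne_of_ne (hnb 0) (hnb 2)]
  · intro i
    have h1 : sE i = i + 2*((i+1) % 2) := rfl
    have h2 : sE (sE i) = sE i + 2*((sE i+1) % 2) := rfl
    omega
  · intro j
    have h1 : sE j = j + 2*((j+1) % 2) := rfl
    have h2 : sE (sE j) = sE j + 2*((sE j+1) % 2) := rfl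
    omega
  · have h1 : sE 1 = 1 + 2*((1+1) % 2) := rfl
    have h0 : sE 0 = 0 + 2*((0+1) % 2) := rfl
    omega
end Part4

section Part4b
variable {P : Type} [PartialOrder P] (g : P ≃o P)

lemma inst2 (hgen : ∀ φ : P ≃o P, ∃ m : ℤ, g ^ m = φ) (a b : P)
    (ha4 : ∀ k : ℤ, (g ^ k) a = a ↔ (4:ℤ) ∣ k)
    (hb4 : ∀ k : ℤ, (g ^ k) b = b ↔ (4:ℤ) ∣ k)
    (hAB : ∀ i j : ℤ, (g ^ i) a ≠ (g ^ j) b)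
    (hBA : ∀ d : ℤ, ¬ b ≤ (g ^ d) a)
    (hAsafe : ∀ y, orbit g y ≠ orbit g a → orbit g y ≠ orbit g b → ∀ i : ℤ,
      ((g ^ i) a ≤ y → (g ^ (sE i)) a ≤ y) ∧ (y ≤ (g ^ i) a → y ≤ (g ^ (sE i)) a))
    (hBsafe : ∀ y, orbit g y ≠ orbit g a → orbit g y ≠ orbit g b → ∀ j : ℤ,
      ((g ^ j) b ≤ y → (g ^ (sO j)) b ≤ y) ∧ (y ≤ (g ^ j) b → y ≤ (g ^ (sO j)) b))
    (hD : ∀ i j : ℤ, a ≤ (g ^ (j - i)) b → a ≤ (g ^ (sO j - sE i)) b) : False := by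
  classical
  have hAne : ∀ r s : ℤ, ¬ (4:ℤ) ∣ (r-s) → (g^r) a ≠ (g^s) a :=
    fun r s h he => h ((pow_eq_iff g a ha4 r s).mp he)
  have hBne : ∀ r s : ℤ, ¬ (4:ℤ) ∣ (r-s) → (g^r) b ≠ (g^s) b :=
    fun r s h he => h ((pow_eq_iff g b hb4 r s).mp he)
  have hBAne : ∀ r s : ℤ, (g^r) b ≠ (g^s) a := fun r s h => hAB s r h.symm
  have hacong : ∀ r s : ℤ, (4:ℤ) ∣ r - s → (g^r) a = (g^s) a :=
    fun r s h => (pow_eq_iff g a ha4 r s).mpr h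
  have hbcong : ∀ r s : ℤ, (4:ℤ) ∣ r - s → (g^r) b = (g^s) b :=
    fun r s h => (pow_eq_iff g b hb4 r s).mpr h
  refine no_auto g hgen a b ha4 hb4
    (fun x => Equiv.swap ((g^(1:ℤ)) b) ((g^(3:ℤ)) b)
      (Equiv.swap ((g^(0:ℤ)) a) ((g^(2:ℤ)) a) x)) sE sO
    ?_ ?_ ?_ ?_ ?_ hD hBA hAsafe hBsafe ?_
  · intro i
    beta_reduce
    have hsE : sE i = i + 2*((i+1) % 2) := rfl
    have h4 : i % 4 = 0 ∨ i % 4 = 1 ∨ i % 4 = 2 ∨ i % 4 = 3 := by omega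
    rcases h4 with h|h|h|h
    · rw [hacong i 0 (by omega), Equiv.swap_apply_left,
        Equiv.swap_apply_of_ne_of_ne (hAB 2 1) (hAB 2 3)]
      exact hacong 2 (sE i) (by omega)
    · rw [hacong i 1 (by omega),
        Equiv.swap_apply_of_ne_of_ne (hAne 1 0 (by omega)) (hAne 1 2 (by omega)),
        Equiv.swap_apply_of_ne_of_ne (hAB 1 1) (hAB 1 3)]
      exact hacong 1 (sE i) (by omega)
    · rw [hacong i 2 (by omega), Equiv.swap_apply_right,
        Equiv.swap_apply_of_ne_of_ne (hAB 0 1) (hAB 0 3)]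
      exact hacong 0 (sE i) (by omega)
    · rw [hacong i 3 (by omega),
        Equiv.swap_apply_of_ne_of_ne (hAne 3 0 (by omega)) (hAne 3 2 (by omega)),
        Equiv.swap_apply_of_ne_of_ne (hAB 3 1) (hAB 3 3)]
      exact hacong 3 (sE i) (by omega)
  · intro j
    beta_reduce
    have hsO : sO j = j + 2*(j % 2) := rfl
    have h4 : j % 4 = 0 ∨ j % 4 = 1 ∨ j % 4 = 2 ∨ j % 4 = 3 := by omega
    rcases h4 with h|h|h|h
    · rw [hbcong j 0 (by omega),
        Equiv.swap_apply_of_ne_of_ne (hBAne 0 0) (hBAne 0 2),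
        Equiv.swap_apply_of_ne_of_ne (hBne 0 1 (by omega)) (hBne 0 3 (by omega))]
      exact hbcong 0 (sO j) (by omega)
    · rw [hbcong j 1 (by omega),
        Equiv.swap_apply_of_ne_of_ne (hBAne 1 0) (hBAne 1 2),
        Equiv.swap_apply_left]
      exact hbcong 3 (sO j) (by omega)
    · rw [hbcong j 2 (by omega),
        Equiv.swap_apply_of_ne_of_ne (hBAne 2 0) (hBAne 2 2),
        Equiv.swap_apply_of_ne_of_ne (hBne 2 1 (by omega)) (hBne 2 3 (by omega))]
      exact hbcong 2 (sO j) (by omega)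
    · rw [hbcong j 3 (by omega),
        Equiv.swap_apply_of_ne_of_ne (hBAne 3 0) (hBAne 3 2),
        Equiv.swap_apply_right]
      exact hbcong 1 (sO j) (by omega)
  · intro x h1 h2
    beta_reduce
    have hna : ∀ r : ℤ, x ≠ (g^r) a := by
      intro r he
      exact h1 (by rw [he]; exact orbit_eq' g _ a ⟨r, rfl⟩)
    have hnb : ∀ r : ℤ, x ≠ (g^r) b := by
      intro r he
      exact h2 (by rw [he]; exact orbit_eq' g _ b ⟨r, rfl⟩)
    rw [Equiv.swap_apply_of_ne_of_ne (hna 0) (hna 2),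
      Equiv.swap_apply_of_ne_of_ne (hnb 1) (hnb 3)]
  · intro i
    have h1 : sE i = i + 2*((i+1) % 2) := rfl
    have h2 : sE (sE i) = sE i + 2*((sE i+1) % 2) := rfl
    omega
  · intro j
    have h1 : sO j = j + 2*(j % 2) := rfl
    have h2 : sO (sO j) = sO j + 2*(sO j % 2) := rfl
    omega
  · have h1 : sE 1 = 1 + 2*((1+1) % 2) := rfl
    have h0 : sE 0 = 0 + 2*((0+1) % 2) := rfl
    omega

lemma inst3 (hgen : ∀ φ : P ≃o P, ∃ m : ℤ, g ^ m = φ) (a b : P) (d : ℤ)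
    (ha4 : ∀ k : ℤ, (g ^ k) a = a ↔ (4:ℤ) ∣ k)
    (hb4 : ∀ k : ℤ, (g ^ k) b = b ↔ (4:ℤ) ∣ k)
    (hAB : ∀ i j : ℤ, (g ^ i) a ≠ (g ^ j) b)
    (hBA : ∀ t : ℤ, ¬ b ≤ (g ^ t) a)
    (hAsafe : ∀ y, orbit g y ≠ orbit g a → orbit g y ≠ orbit g b → ∀ i : ℤ,
      ((g ^ i) a ≤ y → (g ^ (-i)) a ≤ y) ∧ (y ≤ (g ^ i) a → y ≤ (g ^ (-i)) a))
    (hBsafe : ∀ y, orbit g y ≠ orbit g a → orbit g y ≠ orbit g b → ∀ j : ℤ,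
      ((g ^ j) b ≤ y → (g ^ (2*d+1-j)) b ≤ y) ∧ (y ≤ (g ^ j) b → y ≤ (g ^ (2*d+1-j)) b))
    (hD : ∀ i j : ℤ, a ≤ (g ^ (j - i)) b → a ≤ (g ^ ((2*d+1-j) - (-i))) b) : False := by
  classical
  have hAne : ∀ r s : ℤ, ¬ (4:ℤ) ∣ (r-s) → (g^r) a ≠ (g^s) a :=
    fun r s h he => h ((pow_eq_iff g a ha4 r s).mp he)
  have hBne : ∀ r s : ℤ, ¬ (4:ℤ) ∣ (r-s) → (g^r) b ≠ (g^s) b :=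
    fun r s h he => h ((pow_eq_iff g b hb4 r s).mp he)
  have hBAne : ∀ r s : ℤ, (g^r) b ≠ (g^s) a := fun r s h => hAB s r h.symm
  have hacong : ∀ r s : ℤ, (4:ℤ) ∣ r - s → (g^r) a = (g^s) a :=
    fun r s h => (pow_eq_iff g a ha4 r s).mpr h
  have hbcong : ∀ r s : ℤ, (4:ℤ) ∣ r - s → (g^r) b = (g^s) b :=
    fun r s h => (pow_eq_iff g b hb4 r s).mpr h
  refine no_auto g hgen a b ha4 hb4
    (fun x => Equiv.swap ((g^(d+2)) b) ((g^(d+3)) b)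
      (Equiv.swap ((g^d) b) ((g^(d+1)) b)
        (Equiv.swap ((g^(1:ℤ)) a) ((g^(3:ℤ)) a) x)))
    (fun i => -i) (fun j => 2*d+1-j)
    ?_ ?_ ?_ ?_ ?_ hD hBA hAsafe hBsafe ?_
  · intro i
    beta_reduce
    have h4 : i % 4 = 0 ∨ i % 4 = 1 ∨ i % 4 = 2 ∨ i % 4 = 3 := by omega
    rcases h4 with h|h|h|h
    · rw [hacong i 0 (by omega),
        Equiv.swap_apply_of_ne_of_ne (hAne 0 1 (by omega)) (hAne 0 3 (by omega)),
        Equiv.swap_apply_of_ne_of_ne (hAB 0 d) (hAB 0 (d+1)),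
        Equiv.swap_apply_of_ne_of_ne (hAB 0 (d+2)) (hAB 0 (d+3))]
      exact hacong 0 (-i) (by omega)
    · rw [hacong i 1 (by omega), Equiv.swap_apply_left,
        Equiv.swap_apply_of_ne_of_ne (hAB 3 d) (hAB 3 (d+1)),
        Equiv.swap_apply_of_ne_of_ne (hAB 3 (d+2)) (hAB 3 (d+3))]
      exact hacong 3 (-i) (by omega)
    · rw [hacong i 2 (by omega),
        Equiv.swap_apply_of_ne_of_ne (hAne 2 1 (by omega)) (hAne 2 3 (by omega)),
        Equiv.swap_apply_of_ne_of_ne (hAB 2 d) (hAB 2 (d+1)),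
        Equiv.swap_apply_of_ne_of_ne (hAB 2 (d+2)) (hAB 2 (d+3))]
      exact hacong 2 (-i) (by omega)
    · rw [hacong i 3 (by omega), Equiv.swap_apply_right,
        Equiv.swap_apply_of_ne_of_ne (hAB 1 d) (hAB 1 (d+1)),
        Equiv.swap_apply_of_ne_of_ne (hAB 1 (d+2)) (hAB 1 (d+3))]
      exact hacong 1 (-i) (by omega)
  · intro j
    beta_reduce
    have h4 : (j-d) % 4 = 0 ∨ (j-d) % 4 = 1 ∨ (j-d) % 4 = 2 ∨ (j-d) % 4 = 3 := by omega
    rcases h4 with h|h|h|h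
    · rw [hbcong j d (by omega),
        Equiv.swap_apply_of_ne_of_ne (hBAne d 1) (hBAne d 3),
        Equiv.swap_apply_left,
        Equiv.swap_apply_of_ne_of_ne (hBne (d+1) (d+2) (by omega)) (hBne (d+1) (d+3) (by omega))]
      exact hbcong (d+1) (2*d+1-j) (by omega)
    · rw [hbcong j (d+1) (by omega),
        Equiv.swap_apply_of_ne_of_ne (hBAne (d+1) 1) (hBAne (d+1) 3),
        Equiv.swap_apply_right,
        Equiv.swap_apply_of_ne_of_ne (hBne d (d+2) (by omega)) (hBne d (d+3) (by omega))]
      exact hbcong d (2*d+1-j) (by omega)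
    · rw [hbcong j (d+2) (by omega),
        Equiv.swap_apply_of_ne_of_ne (hBAne (d+2) 1) (hBAne (d+2) 3),
        Equiv.swap_apply_of_ne_of_ne (hBne (d+2) d (by omega)) (hBne (d+2) (d+1) (by omega)),
        Equiv.swap_apply_left]
      exact hbcong (d+3) (2*d+1-j) (by omega)
    · rw [hbcong j (d+3) (by omega),
        Equiv.swap_apply_of_ne_of_ne (hBAne (d+3) 1) (hBAne (d+3) 3),
        Equiv.swap_apply_of_ne_of_ne (hBne (d+3) d (by omega)) (hBne (d+3) (d+1) (by omega)),
        Equiv.swap_apply_right]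
      exact hbcong (d+2) (2*d+1-j) (by omega)
  · intro x h1 h2
    beta_reduce
    have hna : ∀ r : ℤ, x ≠ (g^r) a := by
      intro r he
      exact h1 (by rw [he]; exact orbit_eq' g _ a ⟨r, rfl⟩)
    have hnb : ∀ r : ℤ, x ≠ (g^r) b := by
      intro r he
      exact h2 (by rw [he]; exact orbit_eq' g _ b ⟨r, rfl⟩)
    rw [Equiv.swap_apply_of_ne_of_ne (hna 1) (hna 3),
      Equiv.swap_apply_of_ne_of_ne (hnb d) (hnb (d+1)),
      Equiv.swap_apply_of_ne_of_ne (hnb (d+2)) (hnb (d+3))]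
  · intro i; beta_reduce; omega
  · intro j; beta_reduce; omega
  · beta_reduce; omega

lemma inst4 (hgen : ∀ φ : P ≃o P, ∃ m : ℤ, g ^ m = φ) (a b : P) (d : ℤ)
    (ha4 : ∀ k : ℤ, (g ^ k) a = a ↔ (4:ℤ) ∣ k)
    (hb4 : ∀ k : ℤ, (g ^ k) b = b ↔ (4:ℤ) ∣ k)
    (hAB : ∀ i j : ℤ, (g ^ i) a ≠ (g ^ j) b)
    (hBA : ∀ t : ℤ, ¬ b ≤ (g ^ t) a)
    (hAsafe : ∀ y, orbit g y ≠ orbit g a → orbit g y ≠ orbit g b → ∀ i : ℤ,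
      ((g ^ i) a ≤ y → (g ^ (1-i)) a ≤ y) ∧ (y ≤ (g ^ i) a → y ≤ (g ^ (1-i)) a))
    (hBsafe : ∀ y, orbit g y ≠ orbit g a → orbit g y ≠ orbit g b → ∀ j : ℤ,
      ((g ^ j) b ≤ y → (g ^ (2*d+2-j)) b ≤ y) ∧ (y ≤ (g ^ j) b → y ≤ (g ^ (2*d+2-j)) b))
    (hD : ∀ i j : ℤ, a ≤ (g ^ (j - i)) b → a ≤ (g ^ ((2*d+2-j) - (1-i))) b) : False := by
  classical
  have hAne : ∀ r s : ℤ, ¬ (4:ℤ) ∣ (r-s) → (g^r) a ≠ (g^s) a :=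
    fun r s h he => h ((pow_eq_iff g a ha4 r s).mp he)
  have hBne : ∀ r s : ℤ, ¬ (4:ℤ) ∣ (r-s) → (g^r) b ≠ (g^s) b :=
    fun r s h he => h ((pow_eq_iff g b hb4 r s).mp he)
  have hBAne : ∀ r s : ℤ, (g^r) b ≠ (g^s) a := fun r s h => hAB s r h.symm
  have hacong : ∀ r s : ℤ, (4:ℤ) ∣ r - s → (g^r) a = (g^s) a :=
    fun r s h => (pow_eq_iff g a ha4 r s).mpr h
  have hbcong : ∀ r s : ℤ, (4:ℤ) ∣ r - s → (g^r) b = (g^s) b :=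
    fun r s h => (pow_eq_iff g b hb4 r s).mpr h
  refine no_auto g hgen a b ha4 hb4
    (fun x => Equiv.swap ((g^d) b) ((g^(d+2)) b)
      (Equiv.swap ((g^(2:ℤ)) a) ((g^(3:ℤ)) a)
        (Equiv.swap ((g^(0:ℤ)) a) ((g^(1:ℤ)) a) x)))
    (fun i => 1-i) (fun j => 2*d+2-j)
    ?_ ?_ ?_ ?_ ?_ hD hBA hAsafe hBsafe ?_
  · intro i
    beta_reduce
    have h4 : i % 4 = 0 ∨ i % 4 = 1 ∨ i % 4 = 2 ∨ i % 4 = 3 := by omega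
    rcases h4 with h|h|h|h
    · rw [hacong i 0 (by omega), Equiv.swap_apply_left,
        Equiv.swap_apply_of_ne_of_ne (hAne 1 2 (by omega)) (hAne 1 3 (by omega)),
        Equiv.swap_apply_of_ne_of_ne (hAB 1 d) (hAB 1 (d+2))]
      exact hacong 1 (1-i) (by omega)
    · rw [hacong i 1 (by omega), Equiv.swap_apply_right,
        Equiv.swap_apply_of_ne_of_ne (hAne 0 2 (by omega)) (hAne 0 3 (by omega)),
        Equiv.swap_apply_of_ne_of_ne (hAB 0 d) (hAB 0 (d+2))]
      exact hacong 0 (1-i) (by omega)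
    · rw [hacong i 2 (by omega),
        Equiv.swap_apply_of_ne_of_ne (hAne 2 0 (by omega)) (hAne 2 1 (by omega)),
        Equiv.swap_apply_left,
        Equiv.swap_apply_of_ne_of_ne (hAB 3 d) (hAB 3 (d+2))]
      exact hacong 3 (1-i) (by omega)
    · rw [hacong i 3 (by omega),
        Equiv.swap_apply_of_ne_of_ne (hAne 3 0 (by omega)) (hAne 3 1 (by omega)),
        Equiv.swap_apply_right,
        Equiv.swap_apply_of_ne_of_ne (hAB 2 d) (hAB 2 (d+2))]
      exact hacong 2 (1-i) (by omega)
  · intro j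
    beta_reduce
    have h4 : (j-d) % 4 = 0 ∨ (j-d) % 4 = 1 ∨ (j-d) % 4 = 2 ∨ (j-d) % 4 = 3 := by omega
    rcases h4 with h|h|h|h
    · rw [hbcong j d (by omega),
        Equiv.swap_apply_of_ne_of_ne (hBAne d 0) (hBAne d 1),
        Equiv.swap_apply_of_ne_of_ne (hBAne d 2) (hBAne d 3),
        Equiv.swap_apply_left]
      exact hbcong (d+2) (2*d+2-j) (by omega)
    · rw [hbcong j (d+1) (by omega),
        Equiv.swap_apply_of_ne_of_ne (hBAne (d+1) 0) (hBAne (d+1) 1),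
        Equiv.swap_apply_of_ne_of_ne (hBAne (d+1) 2) (hBAne (d+1) 3),
        Equiv.swap_apply_of_ne_of_ne (hBne (d+1) d (by omega)) (hBne (d+1) (d+2) (by omega))]
      exact hbcong (d+1) (2*d+2-j) (by omega)
    · rw [hbcong j (d+2) (by omega),
        Equiv.swap_apply_of_ne_of_ne (hBAne (d+2) 0) (hBAne (d+2) 1),
        Equiv.swap_apply_of_ne_of_ne (hBAne (d+2) 2) (hBAne (d+2) 3),
        Equiv.swap_apply_right]
      exact hbcong d (2*d+2-j) (by omega)
    · rw [hbcong j (d+3) (by omega),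
        Equiv.swap_apply_of_ne_of_ne (hBAne (d+3) 0) (hBAne (d+3) 1),
        Equiv.swap_apply_of_ne_of_ne (hBAne (d+3) 2) (hBAne (d+3) 3),
        Equiv.swap_apply_of_ne_of_ne (hBne (d+3) d (by omega)) (hBne (d+3) (d+2) (by omega))]
      exact hbcong (d+3) (2*d+2-j) (by omega)
  · intro x h1 h2
    beta_reduce
    have hna : ∀ r : ℤ, x ≠ (g^r) a := by
      intro r he
      exact h1 (by rw [he]; exact orbit_eq' g _ a ⟨r, rfl⟩)
    have hnb : ∀ r : ℤ, x ≠ (g^r) b := by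
      intro r he
      exact h2 (by rw [he]; exact orbit_eq' g _ b ⟨r, rfl⟩)
    rw [Equiv.swap_apply_of_ne_of_ne (hna 0) (hna 1),
      Equiv.swap_apply_of_ne_of_ne (hna 2) (hna 3),
      Equiv.swap_apply_of_ne_of_ne (hnb d) (hnb (d+2))]
  · intro i; beta_reduce; omega
  · intro j; beta_reduce; omega
  · beta_reduce; omega
end Part4b

section Part5
variable {P : Type} [PartialOrder P] (g : P ≃o P)

set_option maxHeartbeats 1000000 in
lemma core (hgen : ∀ φ : P ≃o P, ∃ m : ℤ, g ^ m = φ) (a b : P)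
    (ha4 : ∀ k : ℤ, (g ^ k) a = a ↔ (4:ℤ) ∣ k)
    (hb4 : ∀ k : ℤ, (g ^ k) b = b ↔ (4:ℤ) ∣ k)
    (hAB : ∀ i j : ℤ, (g ^ i) a ≠ (g ^ j) b)
    (hper : ∀ y : P, 0 < (orbit g y).ncard ∧
        ∀ k : ℤ, ((g ^ k) y = y ↔ ((orbit g y).ncard : ℤ) ∣ k))
    (hN1 : ∀ y : P, orbit g y ≠ orbit g a → orbit g y ≠ orbit g b → ¬ 4 ∣ (orbit g y).ncard)
    (hN2 : ∀ y z : P, orbit g y ≠ orbit g a → orbit g y ≠ orbit g b →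
        orbit g z ≠ orbit g a → orbit g z ≠ orbit g b →
        2 ∣ (orbit g y).ncard → 2 ∣ (orbit g z).ncard → orbit g y = orbit g z)
    (hBA : ∀ t : ℤ, ¬ b ≤ (g ^ t) a) : False := by
  classical
  have hLfacts : ∀ y : P, orbit g y ≠ orbit g a → orbit g y ≠ orbit g b →
      ((g ^ (((orbit g y).ncard : ℕ):ℤ)) y = y ∧
        ((orbit g y).ncard % 4 = 1 ∨ (orbit g y).ncard % 4 = 2 ∨ (orbit g y).ncard % 4 = 3)) := by
    intro y h1 h2
    obtain ⟨hp, hiff⟩ := hper y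
    refine ⟨(hiff _).mpr dvd_rfl, ?_⟩
    have := hN1 y h1 h2
    omega
  have hsafe_par : ∀ (c : P), (∀ k : ℤ, (g ^ k) c = c ↔ (4:ℤ) ∣ k) →
      ∀ (π : ℤ → ℤ), (∀ i, (2:ℤ) ∣ π i - i) →
      ∀ y, orbit g y ≠ orbit g a → orbit g y ≠ orbit g b → ∀ i : ℤ,
        (((g ^ i) c ≤ y → (g ^ (π i)) c ≤ y) ∧ (y ≤ (g ^ i) c → y ≤ (g ^ (π i)) c)) := by
    intro c hc4 π hπ y hy1 hy2 i
    obtain ⟨hLfix, hL4⟩ := hLfacts y hy1 hy2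
    rcases em ((4:ℤ) ∣ π i - i) with h|h
    · constructor <;> intro hle <;> rwa [(pow_eq_iff g c hc4 (π i) i).mpr h]
    · have h2 : (4:ℤ) ∣ π i - (i + 2) := by have := hπ i; omega
      have hs := step_two g c hc4 y _ hLfix hL4 i
      constructor
      · intro hle
        have := hs.1 hle
        rwa [(pow_eq_iff g c hc4 (π i) (i+2)).mpr h2]
      · intro hle
        have := hs.2 hle
        rwa [(pow_eq_iff g c hc4 (π i) (i+2)).mpr h2]
  have hfree : ∀ (c : P), (∀ k : ℤ, (g ^ k) c = c ↔ (4:ℤ) ∣ k) →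
      (∀ y, orbit g y ≠ orbit g a → orbit g y ≠ orbit g b →
        ((c ≤ y ↔ (g ^ (1:ℤ)) c ≤ y) ∧ (y ≤ c ↔ y ≤ (g ^ (1:ℤ)) c))) →
      ∀ y, orbit g y ≠ orbit g a → orbit g y ≠ orbit g b → ∀ i i' : ℤ,
        (((g ^ i) c ≤ y → (g ^ i') c ≤ y) ∧ (y ≤ (g ^ i) c → y ≤ (g ^ i') c)) := by
    intro c hc4 hef y hy1 hy2 i i'
    obtain ⟨hLfix, hL4⟩ := hLfacts y hy1 hy2
    have hq4 : ∀ u v : ℤ, (4:ℤ) ∣ u - v → ((g ^ u) c ≤ y → (g ^ v) c ≤ y) := by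
      intro u v huv hle
      rwa [(pow_eq_iff g c hc4 v u).mpr (by omega)]
    have hq4' : ∀ u v : ℤ, (4:ℤ) ∣ u - v → (y ≤ (g ^ u) c → y ≤ (g ^ v) c) := by
      intro u v huv hle
      rwa [(pow_eq_iff g c hc4 v u).mpr (by omega)]
    have hg0c : (g ^ (0:ℤ)) c = c := g0 g c
    rcases em (2 ∣ (orbit g y).ncard) with hev|hodd
    · have hs2 := fun i => (step_two g c hc4 y _ hLfix hL4 i).1
      have hs2' := fun i => (step_two g c hc4 y _ hLfix hL4 i).2
      have hiff1 := (hef y hy1 hy2).1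
      have hiff2 := (hef y hy1 hy2).2
      have hstep : ∀ i : ℤ, ((g ^ i) c ≤ y → (g ^ (i+1)) c ≤ y) := by
        intro i hle
        rcases (by omega : i % 4 = 0 ∨ i % 4 = 1 ∨ i % 4 = 2 ∨ i % 4 = 3) with h|h|h|h
        · have q0 : (g ^ (0:ℤ)) c ≤ y := hq4 i 0 (by omega) hle
          rw [hg0c] at q0
          have q1 : (g ^ (1:ℤ)) c ≤ y := hiff1.mp q0
          exact hq4 1 (i+1) (by omega) q1
        · have q1 : (g ^ (1:ℤ)) c ≤ y := hq4 i 1 (by omega) hle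
          have q0 : c ≤ y := hiff1.mpr q1
          rw [← hg0c] at q0
          have q2 := hs2 0 q0
          exact hq4 (0+2) (i+1) (by omega) q2
        · have q2 : (g ^ (2:ℤ)) c ≤ y := hq4 i 2 (by omega) hle
          have q4 := hs2 2 q2
          have q0 : (g ^ (0:ℤ)) c ≤ y := hq4 (2+2) 0 (by omega) q4
          rw [hg0c] at q0
          have q1 : (g ^ (1:ℤ)) c ≤ y := hiff1.mp q0
          have q3 := hs2 1 q1
          exact hq4 (1+2) (i+1) (by omega) q3
        · have q3 : (g ^ (3:ℤ)) c ≤ y := hq4 i 3 (by omega) hle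
          have q5 := hs2 3 q3
          have q1 : (g ^ (1:ℤ)) c ≤ y := hq4 (3+2) 1 (by omega) q5
          have q0 : c ≤ y := hiff1.mpr q1
          rw [← hg0c] at q0
          exact hq4 0 (i+1) (by omega) q0
      have hstep' : ∀ i : ℤ, (y ≤ (g ^ i) c → y ≤ (g ^ (i+1)) c) := by
        intro i hle
        rcases (by omega : i % 4 = 0 ∨ i % 4 = 1 ∨ i % 4 = 2 ∨ i % 4 = 3) with h|h|h|h
        · have q0 : y ≤ (g ^ (0:ℤ)) c := hq4' i 0 (by omega) hle
          rw [hg0c] at q0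
          have q1 : y ≤ (g ^ (1:ℤ)) c := hiff2.mp q0
          exact hq4' 1 (i+1) (by omega) q1
        · have q1 : y ≤ (g ^ (1:ℤ)) c := hq4' i 1 (by omega) hle
          have q0 : y ≤ c := hiff2.mpr q1
          rw [← hg0c] at q0
          have q2 := hs2' 0 q0
          exact hq4' (0+2) (i+1) (by omega) q2
        · have q2 : y ≤ (g ^ (2:ℤ)) c := hq4' i 2 (by omega) hle
          have q4 := hs2' 2 q2
          have q0 : y ≤ (g ^ (0:ℤ)) c := hq4' (2+2) 0 (by omega) q4
          rw [hg0c] at q0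
          have q1 : y ≤ (g ^ (1:ℤ)) c := hiff2.mp q0
          have q3 := hs2' 1 q1
          exact hq4' (1+2) (i+1) (by omega) q3
        · have q3 : y ≤ (g ^ (3:ℤ)) c := hq4' i 3 (by omega) hle
          have q5 := hs2' 3 q3
          have q1 : y ≤ (g ^ (1:ℤ)) c := hq4' (3+2) 1 (by omega) q5
          have q0 : y ≤ c := hiff2.mpr q1
          rw [← hg0c] at q0
          exact hq4' 0 (i+1) (by omega) q0
      exact ⟨fun h => q_ext _ hq4 hstep i i' h, fun h => q_ext _ hq4' hstep' i i' h⟩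
    · have hL13 : (orbit g y).ncard % 4 = 1 ∨ (orbit g y).ncard % 4 = 3 := by omega
      have hs1 := step_one g c hc4 y _ hLfix hL13
      exact ⟨fun h => q_ext _ hq4 (fun u => (hs1 u).1) i i' h,
             fun h => q_ext _ hq4' (fun u => (hs1 u).2) i i' h⟩
  have hoddfull : ∀ (c : P), (∀ k : ℤ, (g ^ k) c = c ↔ (4:ℤ) ∣ k) → ∀ y : P,
      (g ^ (((orbit g y).ncard : ℕ):ℤ)) y = y →
      ((orbit g y).ncard % 4 = 1 ∨ (orbit g y).ncard % 4 = 3) →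
      ((c ≤ y ↔ (g ^ (1:ℤ)) c ≤ y) ∧ (y ≤ c ↔ y ≤ (g ^ (1:ℤ)) c)) := by
    intro c hc4 y hLfix hL13
    have hq4 : ∀ u v : ℤ, (4:ℤ) ∣ u - v → ((g ^ u) c ≤ y → (g ^ v) c ≤ y) := by
      intro u v huv hle
      rwa [(pow_eq_iff g c hc4 v u).mpr (by omega)]
    have hq4' : ∀ u v : ℤ, (4:ℤ) ∣ u - v → (y ≤ (g ^ u) c → y ≤ (g ^ v) c) := by
      intro u v huv hle
      rwa [(pow_eq_iff g c hc4 v u).mpr (by omega)]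
    have hs1 := step_one g c hc4 y _ hLfix hL13
    have up : ∀ u v : ℤ, (g ^ u) c ≤ y → (g ^ v) c ≤ y :=
      fun u v h => q_ext _ hq4 (fun t => (hs1 t).1) u v h
    have dn : ∀ u v : ℤ, y ≤ (g ^ u) c → y ≤ (g ^ v) c :=
      fun u v h => q_ext _ hq4' (fun t => (hs1 t).2) u v h
    have hg0c : (g ^ (0:ℤ)) c = c := g0 g c
    constructor
    · constructor
      · intro h; exact up 0 1 (by rwa [hg0c])
      · intro h; have := up 1 0 h; rwa [hg0c] at this
    · constructor
      · intro h; exact dn 0 1 (by rwa [hg0c])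
      · intro h; have := dn 1 0 h; rwa [hg0c] at this
  have hgetclass : ∀ (c : P), (∀ k : ℤ, (g ^ k) c = c ↔ (4:ℤ) ∣ k) →
      ∀ y, orbit g y ≠ orbit g a → orbit g y ≠ orbit g b →
      ¬((c ≤ y ↔ (g ^ (1:ℤ)) c ≤ y) ∧ (y ≤ c ↔ y ≤ (g ^ (1:ℤ)) c)) →
      ((∃ α : ℤ, ∀ i : ℤ, ((g ^ i) c ≤ y ↔ (2:ℤ) ∣ (i - α))) ∨
       (∃ α : ℤ, ∀ i : ℤ, (y ≤ (g ^ i) c ↔ (2:ℤ) ∣ (i - α)))) ∧ 2 ∣ (orbit g y).ncard := by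
    intro c hc4 y hy1 hy2 hfail
    obtain ⟨hLfix, hL4⟩ := hLfacts y hy1 hy2
    have hev : 2 ∣ (orbit g y).ncard := by
      by_contra hodd
      exact hfail (hoddfull c hc4 y hLfix (by omega))
    refine ⟨?_, hev⟩
    have hq4 : ∀ u v : ℤ, (4:ℤ) ∣ u - v → ((g ^ u) c ≤ y → (g ^ v) c ≤ y) := by
      intro u v huv hle
      rwa [(pow_eq_iff g c hc4 v u).mpr (by omega)]
    have hq4' : ∀ u v : ℤ, (4:ℤ) ∣ u - v → (y ≤ (g ^ u) c → y ≤ (g ^ v) c) := by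
      intro u v huv hle
      rwa [(pow_eq_iff g c hc4 v u).mpr (by omega)]
    have hs2 := fun i => (step_two g c hc4 y _ hLfix hL4 i).1
    have hs2' := fun i => (step_two g c hc4 y _ hLfix hL4 i).2
    have hg0c : (g ^ (0:ℤ)) c = c := g0 g c
    rcases not_and_or.mp hfail with hf|hf
    · left
      rcases em (c ≤ y) with hc|hc <;> rcases em ((g ^ (1:ℤ)) c ≤ y) with hc1|hc1
      · exact absurd (Iff.intro (fun _ => hc1) (fun _ => hc)) hf
      · refine ⟨0, fun i => ?_⟩
        have h0 : (g ^ (0:ℤ)) c ≤ y := by rwa [hg0c]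
        have h1 : ¬ (g ^ ((0:ℤ)+1)) c ≤ y := by
          intro hh; exact hc1 (hq4 (0+1) 1 (by omega) hh)
        exact q_class2 (fun i => (g ^ i) c ≤ y) hq4 hs2 0 h0 h1 i
      · refine ⟨1, fun i => ?_⟩
        have h2 : ¬ (g ^ ((1:ℤ)+1)) c ≤ y := by
          intro hh
          have h4 := hs2 (1+1) hh
          have h0 := hq4 (1+1+2) 0 (by omega) h4
          rw [hg0c] at h0; exact hc h0
        exact q_class2 (fun i => (g ^ i) c ≤ y) hq4 hs2 1 hc1 h2 i
      · exact absurd (Iff.intro (fun h => absurd h hc) (fun h => absurd h hc1)) hf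
    · right
      rcases em (y ≤ c) with hc|hc <;> rcases em (y ≤ (g ^ (1:ℤ)) c) with hc1|hc1
      · exact absurd (Iff.intro (fun _ => hc1) (fun _ => hc)) hf
      · refine ⟨0, fun i => ?_⟩
        have h0 : y ≤ (g ^ (0:ℤ)) c := by rwa [hg0c]
        have h1 : ¬ y ≤ (g ^ ((0:ℤ)+1)) c := by
          intro hh; exact hc1 (hq4' (0+1) 1 (by omega) hh)
        exact q_class2 (fun i => y ≤ (g ^ i) c) hq4' hs2' 0 h0 h1 i
      · refine ⟨1, fun i => ?_⟩
        have h2 : ¬ y ≤ (g ^ ((1:ℤ)+1)) c := by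
          intro hh
          have h4 := hs2' (1+1) hh
          have h0 := hq4' (1+1+2) 0 (by omega) h4
          rw [hg0c] at h0; exact hc h0
        exact q_class2 (fun i => y ≤ (g ^ i) c) hq4' hs2' 1 hc1 h2 i
      · exact absurd (Iff.intro (fun h => absurd h hc) (fun h => absurd h hc1)) hf
  -- main case analysis on the cross-relation between the two 4-orbits
  by_cases h13 : (a ≤ (g ^ (1:ℤ)) b ↔ a ≤ (g ^ (3:ℤ)) b)
  · refine inst1 g hgen a b ha4 hb4 hAB hBA ?_ ?_ ?_
    · exact fun y hy1 hy2 i => hsafe_par a ha4 sE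
        (fun i => by show (2:ℤ) ∣ sE i - i; have : sE i = i + 2*((i+1)%2) := rfl; omega)
        y hy1 hy2 i
    · exact fun y hy1 hy2 j => hsafe_par b hb4 sE
        (fun i => by show (2:ℤ) ∣ sE i - i; have : sE i = i + 2*((i+1)%2) := rfl; omega)
        y hy1 hy2 j
    · intro i j h
      have hsi : sE i = i + 2*((i+1)%2) := rfl
      have hsj : sE j = j + 2*((j+1)%2) := rfl
      rcases em ((4:ℤ) ∣ (sE j - sE i) - (j - i)) with hsame|hdiff
      · rwa [(pow_eq_iff g b hb4 (sE j - sE i) (j-i)).mpr (by omega)]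
      · rcases em ((4:ℤ) ∣ (j - i) - 1) with h1|h1
        · have h' : a ≤ (g ^ (1:ℤ)) b := by
            rwa [(pow_eq_iff g b hb4 (j-i) 1).mpr (by omega)] at h
          have h3 := h13.mp h'
          rwa [(pow_eq_iff g b hb4 (sE j - sE i) 3).mpr (by omega)]
        · have hodd : ¬ (2:ℤ) ∣ (j - i) := by omega
          have h' : a ≤ (g ^ (3:ℤ)) b := by
            rwa [(pow_eq_iff g b hb4 (j-i) 3).mpr (by omega)] at h
          have h3 := h13.mpr h'
          rwa [(pow_eq_iff g b hb4 (sE j - sE i) 1).mpr (by omega)]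
  by_cases h02 : (a ≤ (g ^ (0:ℤ)) b ↔ a ≤ (g ^ (2:ℤ)) b)
  · refine inst2 g hgen a b ha4 hb4 hAB hBA ?_ ?_ ?_
    · exact fun y hy1 hy2 i => hsafe_par a ha4 sE
        (fun i => by show (2:ℤ) ∣ sE i - i; have : sE i = i + 2*((i+1)%2) := rfl; omega)
        y hy1 hy2 i
    · exact fun y hy1 hy2 j => hsafe_par b hb4 sO
        (fun i => by show (2:ℤ) ∣ sO i - i; have : sO i = i + 2*(i%2) := rfl; omega)
        y hy1 hy2 j
    · intro i j h
      have hsi : sE i = i + 2*((i+1)%2) := rfl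
      have hsj : sO j = j + 2*(j%2) := rfl
      rcases em ((4:ℤ) ∣ (sO j - sE i) - (j - i)) with hsame|hdiff
      · rwa [(pow_eq_iff g b hb4 (sO j - sE i) (j-i)).mpr (by omega)]
      · rcases em ((4:ℤ) ∣ (j - i)) with h1|h1
        · have h' : a ≤ (g ^ (0:ℤ)) b := by
            rwa [(pow_eq_iff g b hb4 (j-i) 0).mpr (by omega)] at h
          have h3 := h02.mp h'
          rwa [(pow_eq_iff g b hb4 (sO j - sE i) 2).mpr (by omega)]
        · have hevd : (2:ℤ) ∣ (j - i) := by omega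
          have h' : a ≤ (g ^ (2:ℤ)) b := by
            rwa [(pow_eq_iff g b hb4 (j-i) 2).mpr (by omega)] at h
          have h3 := h02.mpr h'
          rwa [(pow_eq_iff g b hb4 (sO j - sE i) 0).mpr (by omega)]
  -- hard case: the relation set is a "consecutive pair" {d, d+1} mod 4
  have hc : ∀ t r : ℤ, (4:ℤ) ∣ t - r → (a ≤ (g ^ t) b ↔ a ≤ (g ^ r) b) := by
    intro t r h
    rw [(pow_eq_iff g b hb4 t r).mpr h]
  have h2iff : a ≤ (g ^ (2:ℤ)) b ↔ ¬ a ≤ (g ^ (0:ℤ)) b := by tauto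
  have h3iff : a ≤ (g ^ (3:ℤ)) b ↔ ¬ a ≤ (g ^ (1:ℤ)) b := by tauto
  obtain ⟨d, hDfull⟩ : ∃ d : ℤ, ∀ t : ℤ,
      (a ≤ (g ^ t) b ↔ ((4:ℤ) ∣ t - d ∨ (4:ℤ) ∣ t - (d+1))) := by
    rcases em (a ≤ (g ^ (0:ℤ)) b) with h0|h0 <;> rcases em (a ≤ (g ^ (1:ℤ)) b) with h1|h1
    · refine ⟨0, fun t => ?_⟩
      rcases (by omega : t % 4 = 0 ∨ t % 4 = 1 ∨ t % 4 = 2 ∨ t % 4 = 3) with h|h|h|h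
      · rw [hc t 0 (by omega)]; exact ⟨fun _ => Or.inl (by omega), fun _ => h0⟩
      · rw [hc t 1 (by omega)]; exact ⟨fun _ => Or.inr (by omega), fun _ => h1⟩
      · rw [hc t 2 (by omega)]
        exact ⟨fun hh => absurd h0 (h2iff.mp hh),
          fun hh => by exfalso; rcases hh with hh|hh <;> omega⟩
      · rw [hc t 3 (by omega)]
        exact ⟨fun hh => absurd h1 (h3iff.mp hh),
          fun hh => by exfalso; rcases hh with hh|hh <;> omega⟩
    · refine ⟨3, fun t => ?_⟩
      rcases (by omega : t % 4 = 0 ∨ t % 4 = 1 ∨ t % 4 = 2 ∨ t % 4 = 3) with h|h|h|h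
      · rw [hc t 0 (by omega)]; exact ⟨fun _ => Or.inr (by omega), fun _ => h0⟩
      · rw [hc t 1 (by omega)]
        exact ⟨fun hh => absurd hh h1,
          fun hh => by exfalso; rcases hh with hh|hh <;> omega⟩
      · rw [hc t 2 (by omega)]
        exact ⟨fun hh => absurd h0 (h2iff.mp hh),
          fun hh => by exfalso; rcases hh with hh|hh <;> omega⟩
      · rw [hc t 3 (by omega)]
        exact ⟨fun _ => Or.inl (by omega), fun _ => h3iff.mpr h1⟩
    · refine ⟨1, fun t => ?_⟩
      rcases (by omega : t % 4 = 0 ∨ t % 4 = 1 ∨ t % 4 = 2 ∨ t % 4 = 3) with h|h|h|h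
      · rw [hc t 0 (by omega)]
        exact ⟨fun hh => absurd hh h0,
          fun hh => by exfalso; rcases hh with hh|hh <;> omega⟩
      · rw [hc t 1 (by omega)]; exact ⟨fun _ => Or.inl (by omega), fun _ => h1⟩
      · rw [hc t 2 (by omega)]; exact ⟨fun _ => Or.inr (by omega), fun _ => h2iff.mpr h0⟩
      · rw [hc t 3 (by omega)]
        exact ⟨fun hh => absurd h1 (h3iff.mp hh),
          fun hh => by exfalso; rcases hh with hh|hh <;> omega⟩
    · refine ⟨2, fun t => ?_⟩
      rcases (by omega : t % 4 = 0 ∨ t % 4 = 1 ∨ t % 4 = 2 ∨ t % 4 = 3) with h|h|h|h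
      · rw [hc t 0 (by omega)]
        exact ⟨fun hh => absurd hh h0,
          fun hh => by exfalso; rcases hh with hh|hh <;> omega⟩
      · rw [hc t 1 (by omega)]
        exact ⟨fun hh => absurd hh h1,
          fun hh => by exfalso; rcases hh with hh|hh <;> omega⟩
      · rw [hc t 2 (by omega)]; exact ⟨fun _ => Or.inl (by omega), fun _ => h2iff.mpr h0⟩
      · rw [hc t 3 (by omega)]; exact ⟨fun _ => Or.inr (by omega), fun _ => h3iff.mpr h1⟩
  have hd0 : a ≤ (g ^ d) b := (hDfull d).mpr (Or.inl (by omega))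
  have hd1 : a ≤ (g ^ (d+1)) b := (hDfull (d+1)).mpr (Or.inr (by omega))
  -- dichotomy: one of the two 4-orbits is "free" w.r.t. all other orbits
  have hEf : (∀ y, orbit g y ≠ orbit g a → orbit g y ≠ orbit g b →
        ((a ≤ y ↔ (g ^ (1:ℤ)) a ≤ y) ∧ (y ≤ a ↔ y ≤ (g ^ (1:ℤ)) a)))
      ∨ (∀ y, orbit g y ≠ orbit g a → orbit g y ≠ orbit g b →
        ((b ≤ y ↔ (g ^ (1:ℤ)) b ≤ y) ∧ (y ≤ b ↔ y ≤ (g ^ (1:ℤ)) b))) := by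
    by_contra hcon
    obtain ⟨hcA, hcB⟩ := not_or.mp hcon
    obtain ⟨yA, hyA⟩ := not_forall.mp hcA
    have hyA1 : orbit g yA ≠ orbit g a := by
      by_contra h; exact hyA (fun h1 _ => absurd h h1)
    have hyA2 : orbit g yA ≠ orbit g b := by
      by_contra h; exact hyA (fun _ h2 => absurd h h2)
    have hyA3 : ¬ ((a ≤ yA ↔ (g ^ (1:ℤ)) a ≤ yA) ∧ (yA ≤ a ↔ yA ≤ (g ^ (1:ℤ)) a)) :=
      fun hC => hyA (fun _ _ => hC)
    obtain ⟨yB, hyB⟩ := not_forall.mp hcB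
    have hyB1 : orbit g yB ≠ orbit g a := by
      by_contra h; exact hyB (fun h1 _ => absurd h h1)
    have hyB2 : orbit g yB ≠ orbit g b := by
      by_contra h; exact hyB (fun _ h2 => absurd h h2)
    have hyB3 : ¬ ((b ≤ yB ↔ (g ^ (1:ℤ)) b ≤ yB) ∧ (yB ≤ b ↔ yB ≤ (g ^ (1:ℤ)) b)) :=
      fun hC => hyB (fun _ _ => hC)
    obtain ⟨hclA, hevA⟩ := hgetclass a ha4 yA hyA1 hyA2 hyA3
    obtain ⟨hclB, hevB⟩ := hgetclass b hb4 yB hyB1 hyB2 hyB3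
    have hsame : orbit g yA = orbit g yB := hN2 yA yB hyA1 hyA2 hyB1 hyB2 hevA hevB
    obtain ⟨w, hw⟩ : ∃ w : ℤ, (g ^ w) yB = yA := by
      have h : yA ∈ orbit g yB := by rw [← hsame]; exact orbit_self g yA
      exact h
    have hshift : ∀ (x : P) (j : ℤ),
        ((g ^ j) x ≤ yA ↔ (g ^ (j-w)) x ≤ yB) ∧ (yA ≤ (g ^ j) x ↔ yB ≤ (g ^ (j-w)) x) := by
      intro x j
      constructor
      · constructor
        · intro h
          have h2 := (g ^ (-w)).monotone h
          rw [← hw, ← gadd, ← gadd, show -w + w = 0 by ring, g0] at h2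
          rwa [show j - w = -w + j by ring]
        · intro h
          have h2 := (g ^ w).monotone h
          rw [← gadd, show w + (j - w) = j by ring, hw] at h2
          exact h2
      · constructor
        · intro h
          have h2 := (g ^ (-w)).monotone h
          rw [← hw, ← gadd, ← gadd, show -w + w = 0 by ring, g0] at h2
          rwa [show j - w = -w + j by ring]
        · intro h
          have h2 := (g ^ w).monotone h
          rw [← gadd, show w + (j - w) = j by ring, hw] at h2
          exact h2
    rcases hclA with ⟨α, hα⟩|⟨α, hα⟩ <;> rcases hclB with ⟨β, hβ⟩|⟨β, hβ⟩
    · -- a-side below yA, b-side below yB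
      have hb1 : (g ^ (β+w)) b ≤ yA := (hshift b (β+w)).1.mpr ((hβ _).mpr (by omega))
      have hs1 : (g ^ ((β+w)-d)) a ≤ (g ^ (((β+w)-d)+d)) b := le_shift g a b d _ hd0
      rw [show ((β+w)-d)+d = β+w by ring] at hs1
      have ha1 := (hα _).mp (le_trans hs1 hb1)
      have hs2 : (g ^ ((β+w)-(d+1))) a ≤ (g ^ (((β+w)-(d+1))+(d+1))) b := le_shift g a b (d+1) _ hd1
      rw [show ((β+w)-(d+1))+(d+1) = β+w by ring] at hs2
      have ha2 := (hα _).mp (le_trans hs2 hb1)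
      omega
    · -- a-side below yA, yB below b-side
      have q1 : yA ≤ (g ^ (β+w)) b := (hshift b (β+w)).2.mpr ((hβ _).mpr (by omega))
      have q2 : yA ≤ (g ^ (β+w+2)) b := (hshift b (β+w+2)).2.mpr ((hβ _).mpr (by omega))
      have p1 : (g ^ α) a ≤ yA := (hα α).mpr (by omega)
      have c1 : a ≤ (g ^ ((β+w) - α)) b := cross_le g a b α (β+w) (le_trans p1 q1)
      have c2 : a ≤ (g ^ ((β+w+2) - α)) b := cross_le g a b α (β+w+2) (le_trans p1 q2)
      have e1 := (hDfull _).mp c1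
      have e2 := (hDfull _).mp c2
      rcases e1 with e1|e1 <;> rcases e2 with e2|e2 <;> omega
    · -- yA below a-side, b-side below yB
      have p1 : yA ≤ (g ^ α) a := (hα α).mpr (by omega)
      have q1 : (g ^ (β+w)) b ≤ yA := (hshift b (β+w)).1.mpr ((hβ _).mpr (by omega))
      exact hBA (α - (β+w)) (cross_le g b a (β+w) α (le_trans q1 p1))
    · -- yA below a-side, yB below b-side
      have p1 : yA ≤ (g ^ α) a := (hα α).mpr (by omega)
      have s1 : (g ^ α) a ≤ (g ^ (α+d)) b := le_shift g a b d α hd0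
      have v1 := (hβ _).mp ((hshift b (α+d)).2.mp (le_trans p1 s1))
      have s2 : (g ^ α) a ≤ (g ^ (α+(d+1))) b := le_shift g a b (d+1) α hd1
      have v2 := (hβ _).mp ((hshift b (α+(d+1))).2.mp (le_trans p1 s2))
      omega
  rcases hEf with hEfA | hEfB
  · refine inst4 g hgen a b d ha4 hb4 hAB hBA ?_ ?_ ?_
    · intro y hy1 hy2 i
      exact ⟨(hfree a ha4 hEfA y hy1 hy2 i (1-i)).1, (hfree a ha4 hEfA y hy1 hy2 i (1-i)).2⟩
    · exact fun y hy1 hy2 j => hsafe_par b hb4 (fun j => 2*d+2-j)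
        (fun j => by show (2:ℤ) ∣ (2*d+2-j) - j; omega) y hy1 hy2 j
    · intro i j h
      have h1 := (hDfull (j-i)).mp h
      apply (hDfull _).mpr
      rcases h1 with h1|h1
      · right; omega
      · left; omega
  · refine inst3 g hgen a b d ha4 hb4 hAB hBA ?_ ?_ ?_
    · exact fun y hy1 hy2 i => hsafe_par a ha4 (fun i => -i)
        (fun i => by show (2:ℤ) ∣ (-i) - i; omega) y hy1 hy2 i
    · intro y hy1 hy2 j
      exact ⟨(hfree b hb4 hEfB y hy1 hy2 j (2*d+1-j)).1, (hfree b hb4 hEfB y hy1 hy2 j (2*d+1-j)).2⟩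
    · intro i j h
      have h1 := (hDfull (j-i)).mp h
      apply (hDfull _).mpr
      rcases h1 with h1|h1
      · right; omega
      · left; omega
end Part5

/-- Let `P` be a finite poset with `Aut(P)` cyclic of order `n ≥ 1` generated by `g`.
If `⟨g⟩` has two distinct orbits of cardinality `4`, then it has a third orbit of
cardinality divisible by `4`, or two further distinct orbits of even cardinality. -/
theorem third_orbit_div_four_or_two_even (n : ℕ) (hn : 1 ≤ n)
    (P : Type) [PartialOrder P] [Fintype P] (g : P ≃o P)
    (hord : orderOf g = n) (hgen : ∀ φ : P ≃o P, ∃ m : ℤ, g ^ m = φ)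
    (a bb : P) (hab : orbit g a ≠ orbit g bb)
    (ha : (orbit g a).ncard = 4) (hb : (orbit g bb).ncard = 4) :
    (∃ c : P, orbit g c ≠ orbit g a ∧ orbit g c ≠ orbit g bb ∧
      4 ∣ (orbit g c).ncard) ∨
    (∃ c d : P, orbit g c ≠ orbit g a ∧ orbit g c ≠ orbit g bb ∧
      orbit g d ≠ orbit g a ∧ orbit g d ≠ orbit g bb ∧ orbit g c ≠ orbit g d ∧
      2 ∣ (orbit g c).ncard ∧ 2 ∣ (orbit g d).ncard) := by
  classical
  by_contra hcon
  push_neg at hcon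
  obtain ⟨hcon1, hcon2⟩ := hcon
  have hg1 : (g : P ≃o P) ^ n = 1 := by rw [← hord]; exact pow_orderOf_eq_one g
  have hfixall : ∀ x : P, (g ^ n) x = x := fun x => by rw [hg1]; rfl
  have hper : ∀ y : P, 0 < (orbit g y).ncard ∧
      ∀ k : ℤ, ((g ^ k) y = y ↔ ((orbit g y).ncard : ℤ) ∣ k) :=
    fun y => period_facts g n hn hfixall y
  have ha4 : ∀ k : ℤ, (g ^ k) a = a ↔ (4:ℤ) ∣ k := by
    intro k
    have h := (hper a).2 k
    rw [ha] at h
    exact_mod_cast h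
  have hb4 : ∀ k : ℤ, (g ^ k) bb = bb ↔ (4:ℤ) ∣ k := by
    intro k
    have h := (hper bb).2 k
    rw [hb] at h
    exact_mod_cast h
  have hAB : ∀ i j : ℤ, (g ^ i) a ≠ (g ^ j) bb := by
    intro i j he
    apply hab
    have h1 : orbit g ((g ^ i) a) = orbit g a := orbit_eq' g _ a ⟨i, rfl⟩
    have h2 : orbit g ((g ^ j) bb) = orbit g bb := orbit_eq' g _ bb ⟨j, rfl⟩
    rw [← h1, he, h2]
  have hN1 : ∀ y : P, orbit g y ≠ orbit g a → orbit g y ≠ orbit g bb →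
      ¬ 4 ∣ (orbit g y).ncard := fun y h1 h2 => hcon1 y h1 h2
  have hN2 : ∀ y z : P, orbit g y ≠ orbit g a → orbit g y ≠ orbit g bb →
      orbit g z ≠ orbit g a → orbit g z ≠ orbit g bb →
      2 ∣ (orbit g y).ncard → 2 ∣ (orbit g z).ncard → orbit g y = orbit g z := by
    intro y z h1 h2 h3 h4 h5 h6
    by_contra hne
    exact hcon2 y z h1 h2 h3 h4 hne h5 h6
  rcases em (∀ t : ℤ, ¬ bb ≤ (g ^ t) a) with hdir|hdir
  · exact core g hgen a bb ha4 hb4 hAB hper hN1 hN2 hdir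
  · push_neg at hdir
    obtain ⟨t, ht⟩ := hdir
    have hBA' : ∀ t' : ℤ, ¬ a ≤ (g ^ t') bb := by
      intro t' ht'
      have h2 := le_shift g bb a t t' ht
      have h3 : a ≤ (g ^ (t'+t)) a := le_trans ht' h2
      have hfx : ((g ^ (t'+t)) ^ (4:ℕ)) a = a := by
        rw [← zpow_natCast, ← zpow_mul]
        exact (ha4 _).mpr ⟨t'+t, by ring⟩
      have h4 : (g ^ (t'+t)) a = a := aux_fix _ a 4 (by norm_num) hfx h3
      rw [h4] at h2
      have h5 : a = (g ^ t') bb := le_antisymm ht' h2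
      exact hAB 0 t' (by rw [g0]; exact h5)
    exact core g hgen bb a hb4 ha4 (fun i j he => hAB j i he.symm) hper
      (fun y h1 h2 => hN1 y h2 h1)
      (fun y z h1 h2 h3 h4 h5 h6 => hN2 y z h2 h1 h4 h3 h5 h6) hBA'
end

section
/- Let n ≥ 1 and let P be a finite poset with Aut(P) cyclic of order n, generated by g. Suppose 3 does not exactly divide n. If p^r ∈ {2, 4} is a prime power exactly dividing n, then Σ_{α ∈ g} w_{p^r}(α) ≥ b(p^r), where the sum ranges over all cycles α of g. -/
/-- `b` on prime powers: `b 1 = 0`, `b 2 = 1`, `b 3 = b 4 = b 5 = b 7 = 3`,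
and `b (p^r) = 2` for every other prime power. -/
def b (q : ℕ) : ℕ :=
  if q = 1 then 0
  else if q = 2 then 1
  else if q = 3 ∨ q = 4 ∨ q = 5 ∨ q = 7 then 3
  else 2

/-- A prime power `q = p^r` exactly divides `n` if `q ∣ n` and `p^(r+1) = q * p ∤ n`. -/
def ExactDvd (q n : ℕ) : Prop := q ∣ n ∧ ¬ (q * q.minFac ∣ n)

/-- The cycles of the automorphism `g`: the orbits of `⟨g⟩` of cardinality at least `2`. -/
def cycles {P : Type} [PartialOrder P] (g : P ≃o P) : Set (Set P) :=
  {A | (∃ x : P, A = orbit g x) ∧ 2 ≤ A.ncard}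

open scoped Classical

/-- The weight `w_q(α)` of the prime power `q` in a cycle `α` of length `l`, for a
generator of a cyclic automorphism group of order `n`.  Any weight not explicitly
assigned is `0`.
* Exception 6 (`l = 6`): if `3 ∥ n` then `w₃ = 2`; else if `2 ∥ n` then `w₂ = 3`;
  else `w₄ = 3/2`.
* Exception 12 (`l = 12`): if `3 ∥ n` then `w₃ = 4`; else `w₄ = 3`.
* Exception 10-14 (`l = 2p`, `p = 5, 7`): if `2 ∥ n` then `w₂ = 1`, otherwise
  `w₄ = 1/2`; in either case `w_p = 2(p-1)/p`.
* General case (`l = p₁^{r₁}⋯p_k^{r_k} ∉ {6,10,12,14}`): `w_{p_i^{r_i}} = (l/p_i^{r_i})/k`,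
  except that if `p_i^{r_i} = 2` and `2 ∦ n` then `w₂ = 0` and `w₄ = (l/2)/(2k)`. -/
noncomputable def w (n l q : ℕ) : ℚ :=
  if l = 6 then
    (if ExactDvd 3 n then (if q = 3 then 2 else 0)
     else if ExactDvd 2 n then (if q = 2 then 3 else 0)
     else (if q = 4 then 3/2 else 0))
  else if l = 12 then
    (if ExactDvd 3 n then (if q = 3 then 4 else 0)
     else (if q = 4 then 3 else 0))
  else if l = 10 then
    (if q = 5 then 8/5
     else if ExactDvd 2 n then (if q = 2 then 1 else 0)
     else (if q = 4 then 1/2 else 0))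
  else if l = 14 then
    (if q = 7 then 12/7
     else if ExactDvd 2 n then (if q = 2 then 1 else 0)
     else (if q = 4 then 1/2 else 0))
  else
    if IsPrimePow q ∧ ExactDvd q l ∧ ¬ (q = 2 ∧ ¬ ExactDvd 2 n) then
      ((l : ℚ) / q) / (l.primeFactors.card : ℚ)
    else if q = 4 ∧ ¬ ExactDvd 2 n ∧ ExactDvd 2 l then
      ((l : ℚ) / 2) / (2 * (l.primeFactors.card : ℚ))
    else 0


open Function
set_option linter.unusedSectionVars false
set_option linter.unusedVariables false
set_option maxHeartbeats 1000000

namespace AuxWSG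
variable {P : Type} [PartialOrder P] [Fintype P]
variable {P : Type} [PartialOrder P] [Fintype P]

noncomputable def per (g : P ≃o P) (x : P) : ℕ := Function.minimalPeriod (⇑g) x

lemma coe_pow (g : P ≃o P) (k : ℕ) : ⇑(g ^ k) = (⇑g)^[k] := by
  induction k with
  | zero => rfl
  | succ k ih =>
    ext u
    rw [pow_succ, iterate_succ]
    simp only [Function.comp_apply, ← ih]
    rfl

lemma iter_n (g : P ≃o P) {n : ℕ} (hn : 0 < n) (hord : orderOf g = n) (x : P) :
    (⇑g)^[n] x = x := by
  rw [← coe_pow, ← hord, pow_orderOf_eq_one]; rfl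

lemma isPeriodic (g : P ≃o P) {n : ℕ} (hn : 0 < n) (hord : orderOf g = n) (x : P) :
    Function.IsPeriodicPt (⇑g) n x := iter_n g hn hord x

lemma per_pos (g : P ≃o P) {n : ℕ} (hn : 0 < n) (hord : orderOf g = n) (x : P) :
    0 < per g x := (isPeriodic g hn hord x).minimalPeriod_pos hn

lemma per_dvd (g : P ≃o P) {n : ℕ} (hn : 0 < n) (hord : orderOf g = n) (x : P) :
    per g x ∣ n := (isPeriodic g hn hord x).minimalPeriod_dvd

lemma iter_mod (g : P ≃o P) (x : P) (k : ℕ) : (⇑g)^[k % per g x] x = (⇑g)^[k] x :=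
  Function.iterate_mod_minimalPeriod_eq

lemma iter_eq_self (g : P ≃o P) (x : P) {a : ℕ} :
    (⇑g)^[a] x = x ↔ per g x ∣ a := by
  constructor
  · intro h; exact Function.IsPeriodicPt.minimalPeriod_dvd h
  · intro h
    rcases h with ⟨c, rfl⟩
    rw [← iter_mod]
    simp [Nat.mul_mod_right]

lemma iter_eq_iter (g : P ≃o P) {n : ℕ} (hn : 0 < n) (hord : orderOf g = n) (x : P)
    {a b : ℕ} : (⇑g)^[a] x = (⇑g)^[b] x ↔ a % per g x = b % per g x := by
  constructor
  · intro h
    have hp := per_pos g hn hord x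
    have := Function.iterate_injOn_Iio_minimalPeriod (f := ⇑g) (x := x)
      (Nat.mod_lt a hp) (Nat.mod_lt b hp)
    exact this (by
      show (⇑g)^[a % per g x] x = (⇑g)^[b % per g x] x
      rw [iter_mod, iter_mod, h])
  · intro h
    rw [← iter_mod g x a, h, iter_mod]

lemma lt_iter_iff (g : P ≃o P) (m : ℕ) {u v : P} : (⇑g)^[m] u < (⇑g)^[m] v ↔ u < v := by
  rw [← coe_pow]
  exact (g ^ m).lt_iff_lt

lemma antichain (g : P ≃o P) {n : ℕ} (hn : 0 < n) (hord : orderOf g = n) (x : P) (m : ℕ) :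
    ¬ x < (⇑g)^[m] x := by
  intro h
  have key : ∀ k : ℕ, x < (⇑g)^[(k+1) * m] x := by
    intro k
    induction k with
    | zero => simpa using h
    | succ k ih =>
      have h2 : (⇑g)^[(k+1) * m] x < (⇑g)^[(k+1)*m] ((⇑g)^[m] x) := by
        rw [lt_iter_iff]; exact h
      rw [← Function.iterate_add_apply] at h2
      have e : (k+1+1) * m = (k+1) * m + m := by ring
      rw [e]
      exact lt_trans ih h2
  have h3 := key (per g x * n - 1)
  have hpn : 0 < per g x * n := Nat.mul_pos (per_pos g hn hord x) hn
  rw [Nat.sub_add_cancel hpn] at h3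
  have e2 : (⇑g)^[per g x * n * m] x = x := by
    rw [iter_eq_self]
    exact Dvd.dvd.mul_right (Dvd.intro _ rfl) m
  rw [e2] at h3
  exact lt_irrefl _ h3

lemma antichain' (g : P ≃o P) {n : ℕ} (hn : 0 < n) (hord : orderOf g = n) (x : P) (i j : ℕ) :
    ¬ (⇑g)^[i] x < (⇑g)^[j] x := by
  intro h
  set m := per g x * (i+1) - i with hm
  have h2 : (⇑g)^[m] ((⇑g)^[i] x) < (⇑g)^[m] ((⇑g)^[j] x) := by
    rw [lt_iter_iff]; exact h
  rw [← Function.iterate_add_apply, ← Function.iterate_add_apply] at h2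
  have hle : i ≤ per g x * (i+1) := by
    calc i ≤ i + 1 := Nat.le_succ i
    _ ≤ per g x * (i+1) := Nat.le_mul_of_pos_left _ (per_pos g hn hord x)
  have e1 : (⇑g)^[m + i] x = x := by
    rw [iter_eq_self]
    rw [hm, Nat.sub_add_cancel hle]
    exact Dvd.intro _ rfl
  rw [e1] at h2
  exact antichain g hn hord x _ h2

lemma zpow_iterate (g : P ≃o P) {n : ℕ} (hn : 0 < n) (hord : orderOf g = n) (m : ℤ) :
    ∃ k : ℕ, ⇑(g ^ m) = (⇑g)^[k] := by
  have h1 : g ^ m = g ^ (m % (n : ℤ)) := by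
    rw [← hord]; exact (zpow_mod_orderOf g m).symm
  have hnn : (0:ℤ) ≤ m % (n:ℤ) := Int.emod_nonneg m (by exact_mod_cast hn.ne')
  refine ⟨(m % (n:ℤ)).toNat, ?_⟩
  have h2 : g ^ m = g ^ ((m % (n:ℤ)).toNat) := by
    rw [h1, ← zpow_natCast, Int.toNat_of_nonneg hnn]
  rw [h2, coe_pow]

-- generalized CRT
lemma crt (s t : ℕ) (hs : 0 < s) (ht : 0 < t) (i j : ℕ)
    (h : ((Nat.gcd s t : ℤ)) ∣ ((j : ℤ) - (i : ℤ))) :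
    ∃ m : ℕ, (i + m) % s = j % s ∧ m % t = 0 := by
  obtain ⟨e, he⟩ := h
  have hbez := Nat.gcd_eq_gcd_ab s t
  set a := Nat.gcdA s t
  set b := Nat.gcdB s t
  set M : ℤ := t * (b * e) with hM
  have hsd : (s:ℤ) ∣ ((j:ℤ) - i - M) := by
    refine ⟨a * e, ?_⟩
    rw [he, hM, hbez]; ring
  set N : ℤ := ((s * t : ℕ) : ℤ) with hN
  have hN0 : 0 < N := by positivity
  refine ⟨(M % N).toNat, ?_, ?_⟩
  · -- (i + m) % s = j % s
    have hmnn : 0 ≤ M % N := Int.emod_nonneg M hN0.ne'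
    have hsN : (s:ℤ) ∣ N := by rw [hN]; push_cast; exact Dvd.intro _ rfl
    have h1 : (M % N) % (s:ℤ) = M % (s:ℤ) := Int.emod_emod_of_dvd M hsN
    have key : ((i:ℤ) + M % N) % s = (j:ℤ) % s := by
      have e1 : (M % N) ≡ M [ZMOD (s:ℤ)] := h1
      have e2 : ((i:ℤ) + M) ≡ (j:ℤ) [ZMOD (s:ℤ)] := by
        rw [Int.ModEq]
        have := Int.emod_emod_of_dvd
        have h3 : ((i:ℤ) + M) % s = (j:ℤ) % s ↔ (s:ℤ) ∣ (j - (i + M)) := by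
          rw [← Int.modEq_iff_dvd]; rfl
        rw [h3]
        convert hsd using 1
        ring
      exact (e1.add_left (i:ℤ)).trans e2
    -- convert to ℕ
    have : (((i + (M % N).toNat) % s : ℕ) : ℤ) = ((j % s : ℕ) : ℤ) := by
      push_cast
      rw [Int.toNat_of_nonneg hmnn]
      exact key
    exact_mod_cast this
  · have hmnn : 0 ≤ M % N := Int.emod_nonneg M hN0.ne'
    have htN : (t:ℤ) ∣ N := by rw [hN]; push_cast; exact Dvd.intro_left _ rfl
    have h1 : (M % N) % (t:ℤ) = M % (t:ℤ) := Int.emod_emod_of_dvd M htN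
    have h2 : M % (t:ℤ) = 0 := by
      rw [hM]; simp [Int.mul_emod_right]
    have : (((M % N).toNat % t : ℕ) : ℤ) = 0 := by
      push_cast
      rw [Int.toNat_of_nonneg hmnn, h1, h2]
    exact_mod_cast this


lemma per_iter (g : P ≃o P) {n : ℕ} (hn : 0 < n) (hord : orderOf g = n) (x : P) (i : ℕ) :
    per g ((⇑g)^[i] x) = per g x := by
  induction i with
  | zero => rfl
  | succ i ih =>
    rw [Function.iterate_succ_apply']
    rw [← ih]
    exact Function.minimalPeriod_apply ⟨n, hn, isPeriodic g hn hord _⟩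

lemma transport (g : P ≃o P) {n : ℕ} (hn : 0 < n) (hord : orderOf g = n) (x u : P) (i j : ℕ)
    (hd : ((Nat.gcd (per g x) (per g u) : ℤ)) ∣ ((j:ℤ) - (i:ℤ))) :
    ((⇑g)^[i] x < u ↔ (⇑g)^[j] x < u) ∧ (u < (⇑g)^[i] x ↔ u < (⇑g)^[j] x) := by
  obtain ⟨m, hm1, hm2⟩ := crt (per g x) (per g u) (per_pos g hn hord x) (per_pos g hn hord u) i j hd
  have e1 : (⇑g)^[m] ((⇑g)^[i] x) = (⇑g)^[j] x := by
    rw [← Function.iterate_add_apply]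
    rw [iter_eq_iter g hn hord x]
    rwa [Nat.add_comm m i]
  have e2 : (⇑g)^[m] u = u := by
    rw [iter_eq_self]
    exact Nat.dvd_of_mod_eq_zero hm2
  constructor
  · rw [← lt_iter_iff g m, e1, e2]
  · rw [← lt_iter_iff g m (u := u), e1, e2]

lemma mem_orbit_iff (g : P ≃o P) {n : ℕ} (hn : 0 < n) (hord : orderOf g = n) (x u : P) :
    u ∈ orbit g x ↔ ∃ k : ℕ, (⇑g)^[k] x = u := by
  constructor
  · rintro ⟨m, rfl⟩
    obtain ⟨k, hk⟩ := zpow_iterate g hn hord m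
    exact ⟨k, by rw [← hk]⟩
  · rintro ⟨k, rfl⟩
    exact ⟨(k : ℤ), by rw [zpow_natCast, coe_pow]⟩

lemma self_mem_orbit (g : P ≃o P) (x : P) : x ∈ orbit g x := ⟨0, by simp⟩

lemma orbit_eq_of_mem (g : P ≃o P) {n : ℕ} (hn : 0 < n) (hord : orderOf g = n) {x u : P}
    (h : u ∈ orbit g x) : orbit g u = orbit g x := by
  rw [mem_orbit_iff g hn hord] at h
  obtain ⟨k, rfl⟩ := h
  ext v
  rw [mem_orbit_iff g hn hord, mem_orbit_iff g hn hord]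
  constructor
  · rintro ⟨j, rfl⟩
    exact ⟨j + k, by rw [Function.iterate_add_apply]⟩
  · rintro ⟨j, rfl⟩
    refine ⟨j + (per g x * (k+1) - k), ?_⟩
    rw [← Function.iterate_add_apply]
    rw [iter_eq_iter g hn hord x]
    have hle : k ≤ per g x * (k+1) := by
      calc k ≤ k + 1 := Nat.le_succ k
      _ ≤ per g x * (k+1) := Nat.le_mul_of_pos_left _ (per_pos g hn hord x)
    have : j + (per g x * (k + 1) - k) + k = j + per g x * (k+1) := by omega
    rw [this, Nat.add_mul_mod_self_left]

lemma per_eq_of_mem (g : P ≃o P) {n : ℕ} (hn : 0 < n) (hord : orderOf g = n) {x u : P}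
    (h : u ∈ orbit g x) : per g u = per g x := by
  rw [mem_orbit_iff g hn hord] at h
  obtain ⟨k, rfl⟩ := h
  exact per_iter g hn hord x k

lemma orbit_ncard (g : P ≃o P) {n : ℕ} (hn : 0 < n) (hord : orderOf g = n) (x : P) :
    (orbit g x).ncard = per g x := by
  classical
  have he : orbit g x = ↑((Finset.range (per g x)).image (fun k => (⇑g)^[k] x)) := by
    ext v
    rw [mem_orbit_iff g hn hord]
    simp only [Finset.coe_image, Set.mem_image, Finset.mem_coe, Finset.mem_range]
    constructor
    · rintro ⟨k, rfl⟩
      exact ⟨k % per g x, Nat.mod_lt _ (per_pos g hn hord x), iter_mod g x k⟩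
    · rintro ⟨k, _, rfl⟩
      exact ⟨k, rfl⟩
  rw [he, Set.ncard_coe_finset, Finset.card_image_of_injOn, Finset.card_range]
  intro a ha b hb hab
  simp only [Finset.coe_range, Set.mem_Iio] at ha hb
  have := (iter_eq_iter g hn hord x).mp hab
  rwa [Nat.mod_eq_of_lt ha, Nat.mod_eq_of_lt hb] at this

-- number theory helpers
lemma H1 {a bb : ℕ} (ha : a ≠ 0) (hb : bb ≠ 0) (hab : a ∣ bb) (h4a : ¬ 4 ∣ a) (h4b : 4 ∣ bb) :
    a ∣ bb / 2 := by
  have h2b : 2 ∣ bb := dvd_trans ⟨2, rfl⟩ h4b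
  have hb2 : bb / 2 ≠ 0 := by
    intro h
    rcases h2b with ⟨c, rfl⟩
    simp [Nat.mul_div_cancel_left] at h
    simp [h] at hb
  rw [← Nat.factorization_le_iff_dvd ha hb2]
  have hbeq : 2 * (bb / 2) = bb := Nat.two_mul_div_two_of_even (even_iff_two_dvd.mpr h2b)
  have hfb : bb.factorization = Nat.factorization 2 + (bb/2).factorization := by
    rw [← hbeq, Nat.factorization_mul (by norm_num) hb2, hbeq]
  rw [Finsupp.le_def]
  intro p
  have hle : a.factorization p ≤ bb.factorization p := by
    have := (Nat.factorization_le_iff_dvd ha hb).mpr hab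
    exact Finsupp.le_def.mp this p
  by_cases hp : p = 2
  · subst hp
    have h1 : a.factorization 2 ≤ 1 := by
      by_contra hcon
      push_neg at hcon
      exact h4a ((Nat.Prime.pow_dvd_iff_le_factorization Nat.prime_two ha).mpr hcon)
    have h2 : 2 ≤ bb.factorization 2 :=
      (Nat.Prime.pow_dvd_iff_le_factorization Nat.prime_two hb).mp h4b
    have h3 : bb.factorization 2 = 1 + (bb/2).factorization 2 := by
      rw [hfb]; simp [Nat.Prime.factorization Nat.prime_two]
    omega
  · have h4 : bb.factorization p = (bb/2).factorization p := by
      rw [hfb]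
      simp [Nat.Prime.factorization Nat.prime_two, Finsupp.single_apply, Ne.symm hp]
    omega

lemma H3 {t m : ℕ} (ht : ¬ 2 ∣ t) (hd : t ∣ m) (h2 : 2 ∣ m) : t ∣ m / 2 := by
  have hcop : Nat.Coprime t 2 := ((Nat.Prime.coprime_iff_not_dvd Nat.prime_two).mpr ht).symm
  have : m = 2 * (m / 2) := (Nat.two_mul_div_two_of_even (even_iff_two_dvd.mpr h2)).symm
  rw [this] at hd
  exact hcop.dvd_of_dvd_mul_left hd

lemma H4 {t : ℕ} (h : ¬ 4 ∣ t) : Nat.gcd 4 t ∣ 2 := by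
  have hd : Nat.gcd 4 t ∣ 2 ^ 2 := Nat.gcd_dvd_left 4 t
  obtain ⟨k, hk, he⟩ := (Nat.dvd_prime_pow Nat.prime_two).mp hd
  interval_cases k
  · simp [he]
  · simp [he]
  · exfalso
    have he4 : Nat.gcd 4 t = 4 := by rw [he]; norm_num
    exact h (he4 ▸ Nat.gcd_dvd_right 4 t)

lemma H5 {t : ℕ} (h : ¬ 2 ∣ t) : Nat.gcd 4 t = 1 := by
  have : Nat.Coprime 2 t := (Nat.Prime.coprime_iff_not_dvd Nat.prime_two).mpr h
  have h4 : Nat.Coprime (2^2) t := Nat.Coprime.pow_left 2 this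
  simpa using h4

lemma pow2_ge (k : ℕ) (hk : 1 ≤ k) : 2 * k ≤ 2 ^ k := by
  induction k with
  | zero => omega
  | succ k ih =>
    rcases Nat.eq_or_lt_of_le hk with h | h
    · simp [← h]
    · have := ih (by omega)
      rw [pow_succ]
      omega

lemma pow3_ge (k : ℕ) (hk : 1 ≤ k) : 3 * k ≤ 3 ^ k := by
  induction k with
  | zero => omega
  | succ k ih =>
    rcases Nat.eq_or_lt_of_le hk with h | h
    · simp [← h]
    · have := ih (by omega)
      rw [pow_succ]
      omega

lemma N1 {l : ℕ} (hl : l ≠ 0) (h2 : 2 ∣ l) : 2 * l.primeFactors.card ≤ l := by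
  have hprod : ∏ p ∈ l.primeFactors, p ∣ l := Nat.prod_primeFactors_dvd l
  have hprodle : ∏ p ∈ l.primeFactors, p ≤ l := Nat.le_of_dvd (Nat.pos_of_ne_zero hl) hprod
  have hpow : 2 ^ l.primeFactors.card ≤ ∏ p ∈ l.primeFactors, p := by
    apply Finset.pow_card_le_prod
    intro p hp
    exact (Nat.prime_of_mem_primeFactors hp).two_le
  have hcard : 1 ≤ l.primeFactors.card := by
    have : 2 ∈ l.primeFactors := Nat.mem_primeFactors.mpr ⟨Nat.prime_two, h2, hl⟩
    exact Finset.card_pos.mpr ⟨2, this⟩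
  calc 2 * l.primeFactors.card ≤ 2 ^ l.primeFactors.card := pow2_ge _ hcard
  _ ≤ l := le_trans hpow hprodle

lemma N2 {l : ℕ} (hl : l ≠ 0) (h4 : 4 ∣ l) (h8 : ¬ 8 ∣ l) (hne4 : l ≠ 4) (hne12 : l ≠ 12)
    (hne20 : l ≠ 20) : 8 * l.primeFactors.card ≤ l := by
  obtain ⟨u, hu⟩ := h4
  have hu0 : u ≠ 0 := by rintro rfl; simp at hu; exact hl hu
  have huodd : ¬ 2 ∣ u := by
    rintro ⟨v, rfl⟩
    exact h8 ⟨v, by rw [hu]; ring⟩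
  have hpf : l.primeFactors = (4 : ℕ).primeFactors ∪ u.primeFactors := by
    rw [hu, Nat.primeFactors_mul (by norm_num) hu0]
  have hpf4 : (4 : ℕ).primeFactors = {2} := by
    rw [show (4:ℕ) = 2^2 by norm_num, Nat.primeFactors_pow _ (by norm_num),
      Nat.Prime.primeFactors Nat.prime_two]
  have hcard : l.primeFactors.card ≤ 1 + u.primeFactors.card := by
    rw [hpf, hpf4]
    calc ({2} ∪ u.primeFactors).card ≤ ({2} : Finset ℕ).card + u.primeFactors.card :=
      Finset.card_union_le _ _
    _ = 1 + u.primeFactors.card := by simp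
  set c := u.primeFactors.card with hc
  have hu3 : 3 ^ c ≤ u := by
    have hprod : ∏ p ∈ u.primeFactors, p ∣ u := Nat.prod_primeFactors_dvd u
    have hprodle : ∏ p ∈ u.primeFactors, p ≤ u := Nat.le_of_dvd (Nat.pos_of_ne_zero hu0) hprod
    refine le_trans (Finset.pow_card_le_prod _ _ _ ?_) hprodle
    intro p hp
    have hprime := Nat.prime_of_mem_primeFactors hp
    have hpdvd := Nat.dvd_of_mem_primeFactors hp
    have : p ≠ 2 := by rintro rfl; exact huodd hpdvd
    have := hprime.two_le
    omega
  have hune : u ≠ 1 ∧ u ≠ 3 ∧ u ≠ 5 := by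
    refine ⟨?_, ?_, ?_⟩ <;> rintro rfl <;> simp at hu <;> omega
  -- goal : 8 * card ≤ l = 4 * u ; suffices 2 * (1 + c) ≤ u
  have key : 2 + 2 * c ≤ u := by
    rcases Nat.eq_zero_or_pos c with h0 | hpos
    · -- c = 0 → u = 1
      exfalso
      have : u.primeFactors = ∅ := Finset.card_eq_zero.mp h0
      have := Nat.primeFactors_eq_empty.mp this
      rcases this with h | h
      · exact hu0 h
      · exact hune.1 h
    · rcases Nat.eq_or_lt_of_le hpos with h1 | h2
      · -- c = 1 : u odd, not 1,3,5 → u ≥ 7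
        have hu1 : u ≠ 1 := hune.1
        have : 2 + 2 * c = 4 := by omega
        rw [this]
        rcases hune with ⟨e1, e3, e5⟩
        have : u % 2 = 1 := Nat.two_dvd_ne_zero.mp huodd
        omega
      · have h3c : 3 * c ≤ 3 ^ c := pow3_ge c (by omega)
        have : 2 + 2 * c ≤ 3 * c := by omega
        omega
  calc 8 * l.primeFactors.card ≤ 8 * (1 + c) := by
        exact Nat.mul_le_mul_left 8 hcard
  _ = 4 * (2 + 2 * c) := by ring
  _ ≤ 4 * u := Nat.mul_le_mul_left 4 key
  _ = l := hu.symm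

lemma minFac2 : Nat.minFac 2 = 2 := by norm_num
lemma minFac4 : Nat.minFac 4 = 2 := by norm_num

lemma exact2_iff (m : ℕ) : ExactDvd 2 m ↔ 2 ∣ m ∧ ¬ 4 ∣ m := by
  unfold ExactDvd
  rw [minFac2]

lemma exact4_iff (m : ℕ) : ExactDvd 4 m ↔ 4 ∣ m ∧ ¬ 8 ∣ m := by
  unfold ExactDvd
  rw [minFac4]

lemma isPrimePow2 : IsPrimePow 2 := Nat.prime_two.isPrimePow
lemma isPrimePow4 : IsPrimePow (4:ℕ) := ⟨2, 2, Nat.prime_two.prime, by norm_num, by norm_num⟩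

lemma pf4 : (4:ℕ).primeFactors = {2} := by
  rw [show (4:ℕ) = 2^2 by norm_num, Nat.primeFactors_pow _ (by norm_num),
    Nat.Prime.primeFactors Nat.prime_two]

lemma pf4card : ((4:ℕ).primeFactors.card : ℚ) = 1 := by rw [pf4]; norm_num

lemma pf20card : ((20:ℕ).primeFactors.card : ℚ) = 2 := by
  have h : (20:ℕ) = 4 * 5 := by norm_num
  rw [h, Nat.primeFactors_mul (by norm_num) (by norm_num), pf4,
    Nat.Prime.primeFactors (by norm_num)]
  have h2 : (({2} ∪ {5} : Finset ℕ)).card = 2 := by decide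
  rw [h2]
  norm_num

lemma card_pf_pos {l : ℕ} (hl : 2 ≤ l) : 0 < l.primeFactors.card :=
  Finset.card_pos.mpr (Nat.nonempty_primeFactors.mpr (by omega))

lemma rq1 {l c : ℕ} (hc : 0 < c) (h : 2 * c ≤ l) : (1:ℚ) ≤ (l:ℚ)/2/c := by
  have hc' : (0:ℚ) < c := by exact_mod_cast hc
  rw [div_div, le_div_iff₀ (by positivity)]
  have h2 : ((2*c : ℕ):ℚ) ≤ (l:ℚ) := by exact_mod_cast h
  push_cast at h2
  linarith

lemma rq2 {l c : ℕ} (hc : 0 < c) (h : 8 * c ≤ l) : (2:ℚ) ≤ (l:ℚ)/4/c := by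
  have hc' : (0:ℚ) < c := by exact_mod_cast hc
  rw [div_div, le_div_iff₀ (by positivity)]
  have h2 : ((8*c : ℕ):ℚ) ≤ (l:ℚ) := by exact_mod_cast h
  push_cast at h2
  linarith

lemma rq3 {l c : ℕ} (hc : 0 < c) (h : 2 * c ≤ l) : (1/2:ℚ) ≤ (l:ℚ)/2/(2*c) := by
  have hc' : (0:ℚ) < c := by exact_mod_cast hc
  rw [div_div, le_div_iff₀ (by positivity)]
  have h2 : ((2*c : ℕ):ℚ) ≤ (l:ℚ) := by exact_mod_cast h
  push_cast at h2
  linarith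

lemma w_nonneg (n l q : ℕ) : 0 ≤ w n l q := by
  unfold w
  split_ifs <;> positivity

lemma w_two_ge {n l : ℕ} (h3 : ¬ ExactDvd 3 n) (h2n : ExactDvd 2 n)
    (h2l : 2 ∣ l) (h4l : ¬ 4 ∣ l) (hl2 : 2 ≤ l) : 1 ≤ w n l 2 := by
  have h6 := em (l = 6)
  rcases h6 with h6 | h6
  · subst h6; unfold w; rw [if_pos rfl, if_neg h3, if_pos h2n, if_pos rfl]; norm_num
  by_cases h10 : l = 10
  · subst h10; unfold w
    rw [if_neg (by norm_num), if_neg (by norm_num), if_pos rfl, if_neg (by norm_num),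
      if_pos h2n, if_pos rfl]
  by_cases h14 : l = 14
  · subst h14; unfold w
    rw [if_neg (by norm_num), if_neg (by norm_num), if_neg (by norm_num), if_pos rfl,
      if_neg (by norm_num), if_pos h2n, if_pos rfl]
  have h12 : l ≠ 12 := by rintro rfl; exact h4l (by norm_num)
  have hcond : IsPrimePow 2 ∧ ExactDvd 2 l ∧ ¬ ((2:ℕ) = 2 ∧ ¬ ExactDvd 2 n) := by
    refine ⟨isPrimePow2, (exact2_iff l).mpr ⟨h2l, h4l⟩, ?_⟩
    rintro ⟨-, hc⟩; exact hc h2n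
  unfold w
  rw [if_neg h6, if_neg h12, if_neg h10, if_neg h14, if_pos hcond]
  push_cast
  exact rq1 (card_pf_pos hl2) (N1 (by omega) h2l)

lemma w_four_ge_half {n l : ℕ} (h3 : ¬ ExactDvd 3 n) (hn2 : ¬ ExactDvd 2 n)
    (h2l : 2 ∣ l) (h4l : ¬ 4 ∣ l) (hl2 : 2 ≤ l) : 1/2 ≤ w n l 4 := by
  rcases em (l = 6) with h6 | h6
  · subst h6; unfold w; rw [if_pos rfl, if_neg h3, if_neg hn2, if_pos rfl]; norm_num
  by_cases h10 : l = 10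
  · subst h10; unfold w
    rw [if_neg (by norm_num), if_neg (by norm_num), if_pos rfl, if_neg (by norm_num),
      if_neg hn2, if_pos rfl]
  by_cases h14 : l = 14
  · subst h14; unfold w
    rw [if_neg (by norm_num), if_neg (by norm_num), if_neg (by norm_num), if_pos rfl,
      if_neg (by norm_num), if_neg hn2, if_pos rfl]
  have h12 : l ≠ 12 := by rintro rfl; exact h4l (by norm_num)
  have hcond : ¬ (IsPrimePow 4 ∧ ExactDvd 4 l ∧ ¬ ((4:ℕ) = 2 ∧ ¬ ExactDvd 2 n)) := by
    rintro ⟨-, hd, -⟩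
    exact h4l hd.1
  have hcond2 : (4:ℕ) = 4 ∧ ¬ ExactDvd 2 n ∧ ExactDvd 2 l :=
    ⟨rfl, hn2, (exact2_iff l).mpr ⟨h2l, h4l⟩⟩
  unfold w
  rw [if_neg h6, if_neg h12, if_neg h10, if_neg h14, if_neg hcond, if_pos hcond2]
  exact rq3 (card_pf_pos hl2) (N1 (by omega) h2l)

lemma w_four_ge_one {n l : ℕ} (h3 : ¬ ExactDvd 3 n) (hn2 : ¬ ExactDvd 2 n)
    (h4l : 4 ∣ l) (h8l : ¬ 8 ∣ l) : 1 ≤ w n l 4 ∧ (w n l 4 < 2 → l = 4) := by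
  have hl2 : 2 ≤ l := by
    rcases h4l with ⟨u, rfl⟩
    rcases Nat.eq_zero_or_pos u with rfl | h
    · exfalso; exact h8l (by norm_num)
    · omega
  have h6 : l ≠ 6 := by rintro rfl; norm_num at h4l
  have h10 : l ≠ 10 := by rintro rfl; norm_num at h4l
  have h14 : l ≠ 14 := by rintro rfl; norm_num at h4l
  by_cases h12 : l = 12
  · subst h12; unfold w
    rw [if_neg (by norm_num), if_pos rfl, if_neg h3, if_pos rfl]
    norm_num
  have hcond : IsPrimePow (4:ℕ) ∧ ExactDvd 4 l ∧ ¬ ((4:ℕ) = 2 ∧ ¬ ExactDvd 2 n) := by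
    refine ⟨isPrimePow4, (exact4_iff l).mpr ⟨h4l, h8l⟩, ?_⟩
    rintro ⟨hc, -⟩; norm_num at hc
  unfold w
  rw [if_neg h6, if_neg h12, if_neg h10, if_neg h14, if_pos hcond]
  by_cases hl4 : l = 4
  · subst hl4
    rw [pf4card]
    norm_num
  by_cases hl20 : l = 20
  · subst hl20
    rw [pf20card]
    norm_num
  · have hb := rq2 (card_pf_pos hl2) (N2 (by omega) h4l h8l hl4 h12 hl20)
    constructor
    · push_cast; linarith
    · intro hcon; push_cast at hcon; linarith

lemma exists_iso (F : P → P) (hinv : Function.Involutive F)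
    (hmono : ∀ u v : P, u < v → F u < F v) : ∃ φ : P ≃o P, ⇑φ = F := by
  have hmono2 : ∀ u v : P, u ≤ v → F u ≤ F v := by
    intro u v huv
    rcases lt_or_eq_of_le huv with h | h
    · exact (hmono u v h).le
    · rw [h]
  refine ⟨⟨hinv.toPerm F, ?_⟩, rfl⟩
  intro u v
  constructor
  · intro h
    change F u ≤ F v at h
    have h2 := hmono2 _ _ h
    rwa [hinv u, hinv v] at h2
  · exact hmono2 u v

lemma gen_iterate (g : P ≃o P) {n : ℕ} (hn : 0 < n) (hord : orderOf g = n)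
    (hgen : ∀ φ : P ≃o P, ∃ m : ℤ, g ^ m = φ) (φ : P ≃o P) :
    ∃ k : ℕ, (⇑g)^[k] = ⇑φ := by
  obtain ⟨m, hm⟩ := hgen φ
  obtain ⟨k, hk⟩ := zpow_iterate g hn hord m
  exact ⟨k, by rw [← hk, hm]⟩

lemma caseA (g : P ≃o P) {n : ℕ} (hn : 0 < n) (hord : orderOf g = n)
    (hgen : ∀ φ : P ≃o P, ∃ m : ℤ, g ^ m = φ) (x : P)
    (h4 : 4 ∣ per g x) (huniq : ∀ u : P, 4 ∣ per g u → u ∈ orbit g x) : False := by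
  set l := per g x with hl
  have hlpos : 0 < l := per_pos g hn hord x
  have hl4 : 4 ≤ l := Nat.le_of_dvd hlpos h4
  have hhalf : 2 ≤ l / 2 := by omega
  have hhalflt : l / 2 < l := by omega
  set bpt := (⇑g)^[l/2] x with hbpt
  have hne : x ≠ bpt := by
    intro h
    rw [hbpt] at h
    have h' : (⇑g)^[0] x = (⇑g)^[l/2] x := h
    have h2 := (iter_eq_iter g hn hord x).mp h'
    rw [Nat.zero_mod, Nat.mod_eq_of_lt hhalflt] at h2
    omega
  -- comparability of x and bpt with points outside the orbit
  have key1 : ∀ u : P, u ∉ orbit g x →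
      ((x < u ↔ bpt < u) ∧ (u < x ↔ u < bpt)) := by
    intro u hu
    have ht4 : ¬ 4 ∣ per g u := fun h => hu (huniq u h)
    have htpos : 0 < per g u := per_pos g hn hord u
    have hgcd : Nat.gcd l (per g u) ∣ l / 2 := by
      refine H1 ?_ ?_ (Nat.gcd_dvd_left _ _) ?_ h4
      · exact (Nat.gcd_pos_of_pos_left _ hlpos).ne'
      · omega
      · intro hcon; exact ht4 (dvd_trans hcon (Nat.gcd_dvd_right _ _))
    have hd : ((Nat.gcd (per g x) (per g u) : ℤ)) ∣ (((l/2 : ℕ):ℤ) - ((0:ℕ):ℤ)) := by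
      rw [← hl]
      simp only [Nat.cast_zero, sub_zero]
      exact_mod_cast hgcd
    have htr := transport g hn hord x u 0 (l/2) hd
    simp only [Function.iterate_zero_apply] at htr
    exact ⟨htr.1, htr.2⟩
  have key2 : ∀ i j : ℕ, ¬ (⇑g)^[i] x < (⇑g)^[j] x := antichain' g hn hord x
  classical
  set F : P → P := fun u => if u = x then bpt else if u = bpt then x else u with hF
  have hFx : F x = bpt := by simp [hF]
  have hFb : F bpt = x := by simp [hF, Ne.symm hne]
  have hFo : ∀ u, u ≠ x → u ≠ bpt → F u = u := by
    intro u h1 h2; simp [hF, h1, h2]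
  have hinv : Function.Involutive F := by
    intro u
    by_cases h1 : u = x
    · rw [h1, hFx, hFb]
    by_cases h2 : u = bpt
    · rw [h2, hFb, hFx]
    · rw [hFo u h1 h2, hFo u h1 h2]
  have hmono : ∀ u v : P, u < v → F u < F v := by
    intro u v huv
    by_cases hu1 : u = x
    · rw [hu1] at huv ⊢
      by_cases hv2 : v = bpt
      · exfalso
        rw [hv2, hbpt] at huv
        exact key2 0 (l/2) huv
      · have hv1 : v ≠ x := ne_of_gt huv
        rw [hFx, hFo v hv1 hv2]
        by_cases hvo : v ∈ orbit g x
        · exfalso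
          obtain ⟨k, rfl⟩ := (mem_orbit_iff g hn hord x v).mp hvo
          exact key2 0 k huv
        · exact ((key1 v hvo).1).mp huv
    by_cases hu2 : u = bpt
    · rw [hu2] at huv ⊢
      by_cases hv1 : v = x
      · exfalso
        rw [hv1, hbpt] at huv
        exact key2 (l/2) 0 huv
      by_cases hv2 : v = bpt
      · exfalso; rw [hv2] at huv; exact lt_irrefl _ huv
      · rw [hFb, hFo v hv1 hv2]
        by_cases hvo : v ∈ orbit g x
        · exfalso
          obtain ⟨k, rfl⟩ := (mem_orbit_iff g hn hord x v).mp hvo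
          rw [hbpt] at huv
          exact key2 (l/2) k huv
        · exact ((key1 v hvo).1).mpr huv
    · rw [hFo u hu1 hu2]
      by_cases hv1 : v = x
      · rw [hv1] at huv ⊢
        rw [hFx]
        by_cases huo : u ∈ orbit g x
        · exfalso
          obtain ⟨k, rfl⟩ := (mem_orbit_iff g hn hord x u).mp huo
          exact key2 k 0 huv
        · exact ((key1 u huo).2).mp huv
      by_cases hv2 : v = bpt
      · rw [hv2] at huv ⊢
        rw [hFb]
        by_cases huo : u ∈ orbit g x
        · exfalso
          obtain ⟨k, rfl⟩ := (mem_orbit_iff g hn hord x u).mp huo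
          rw [hbpt] at huv
          exact key2 k (l/2) huv
        · exact ((key1 u huo).2).mpr huv
      · rw [hFo v hv1 hv2]
        exact huv
  obtain ⟨φ, hφ⟩ := exists_iso F hinv hmono
  obtain ⟨k, hk⟩ := gen_iterate g hn hord hgen φ
  rw [hφ] at hk
  -- evaluate at g^[1] x
  have hc : F ((⇑g)^[1] x) = (⇑g)^[1] x := by
    apply hFo
    · intro h
      have h' : (⇑g)^[1] x = (⇑g)^[0] x := h.trans rfl
      have h2 := (iter_eq_iter g hn hord x).mp h'
      rw [Nat.mod_eq_of_lt (by omega : 1 < l), Nat.zero_mod] at h2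
      omega
    · intro h
      rw [hbpt] at h
      have h2 := (iter_eq_iter g hn hord x).mp h
      rw [Nat.mod_eq_of_lt (by omega : 1 < l), Nat.mod_eq_of_lt hhalflt] at h2
      omega
  have hk1 : (⇑g)^[k] ((⇑g)^[1] x) = (⇑g)^[1] x := by rw [hk, hc]
  have hper1 : per g ((⇑g)^[1] x) = l := per_iter g hn hord x 1
  have hdvd : l ∣ k := by
    have := (iter_eq_self g ((⇑g)^[1] x)).mp hk1
    rwa [hper1] at this
  have hx : (⇑g)^[k] x = x := (iter_eq_self g x).mpr (by rwa [← hl])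
  rw [hk] at hx
  rw [hFx] at hx
  exact hne hx.symm

/-- indexing of a 4-orbit -/
noncomputable def XF (g : P ≃o P) (x : P) (i : ZMod 4) : P := (⇑g)^[i.val] x

/-- relations to `u` are invariant under a unit shift of the 4-orbit of `x` -/
def ShiftInv (g : P ≃o P) (x u : P) : Prop :=
  ∀ i : ZMod 4, ((XF g x i < u) ↔ (XF g x (i+1) < u)) ∧ ((u < XF g x i) ↔ (u < XF g x (i+1)))

section CaseB
variable (g : P ≃o P) {n : ℕ}

lemma iterX (hn : 0 < n) (hord : orderOf g = n) (x : P) (hpx : per g x = 4)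
    (i : ZMod 4) (k : ℕ) : (⇑g)^[k] (XF g x i) = XF g x (i + (k : ZMod 4)) := by
  unfold XF
  rw [← Function.iterate_add_apply]
  rw [iter_eq_iter g hn hord x, hpx]
  rw [ZMod.val_add, ZMod.val_natCast]
  omega

lemma Xinj (hn : 0 < n) (hord : orderOf g = n) (x : P) (hpx : per g x = 4)
    {i j : ZMod 4} (h : XF g x i = XF g x j) : i = j := by
  unfold XF at h
  have h2 := (iter_eq_iter g hn hord x).mp h
  rw [hpx] at h2
  have hi := ZMod.val_lt i
  have hj := ZMod.val_lt j
  have : i.val = j.val := by omega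
  exact ZMod.val_injective _ this

lemma memX (hn : 0 < n) (hord : orderOf g = n) (x : P) (hpx : per g x = 4) (u : P) :
    u ∈ orbit g x ↔ ∃ i : ZMod 4, u = XF g x i := by
  rw [mem_orbit_iff g hn hord]
  constructor
  · rintro ⟨k, rfl⟩
    refine ⟨(k : ZMod 4), ?_⟩
    have := iterX g hn hord x hpx 0 k
    simp only [zero_add] at this
    rw [← this]
    rfl
  · rintro ⟨i, rfl⟩
    exact ⟨i.val, rfl⟩

lemma X_to_base (hn : 0 < n) (hord : orderOf g = n) (x : P) (hpx : per g x = 4)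
    (i : ZMod 4) : (⇑g)^[4 - i.val] (XF g x i) = x := by
  rw [iterX g hn hord x hpx]
  have hval : i.val ≤ 4 := (ZMod.val_lt i).le
  have : ((4 - i.val : ℕ) : ZMod 4) = - i := by
    rw [Nat.cast_sub hval]
    simp
    decide
  rw [this]
  simp [XF]

lemma relXY (hn : 0 < n) (hord : orderOf g = n) (x y : P) (hpx : per g x = 4)
    (hpy : per g y = 4) (i j : ZMod 4) :
    XF g x i < XF g y j ↔ x < XF g y (j - i) := by
  rw [← lt_iter_iff g (4 - i.val) (u := XF g x i)]
  rw [X_to_base g hn hord x hpx, iterX g hn hord y hpy]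
  have hval : i.val ≤ 4 := (ZMod.val_lt i).le
  have : ((4 - i.val : ℕ) : ZMod 4) = - i := by
    rw [Nat.cast_sub hval]; simp; decide
  rw [this, sub_eq_add_neg]

lemma antiX (hn : 0 < n) (hord : orderOf g = n) (x : P) (i j : ZMod 4) :
    ¬ XF g x i < XF g x j := antichain' g hn hord x i.val j.val

lemma free_transport (hn : 0 < n) (hord : orderOf g = n) (x u : P) (hpx : per g x = 4)
    (hodd : ¬ 2 ∣ per g u) (i j : ZMod 4) :
    (XF g x i < u ↔ XF g x j < u) ∧ (u < XF g x i ↔ u < XF g x j) := by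
  have h := transport g hn hord x u i.val j.val (by
    rw [hpx, H5 hodd]
    exact one_dvd _)
  exact h

lemma par_transport (hn : 0 < n) (hord : orderOf g = n) (x u : P) (hpx : per g x = 4)
    (h4 : ¬ 4 ∣ per g u) (i j : ZMod 4) (hpar : i.val % 2 = j.val % 2) :
    (XF g x i < u ↔ XF g x j < u) ∧ (u < XF g x i ↔ u < XF g x j) := by
  have hgcd : (Nat.gcd (per g x) (per g u) : ℤ) ∣ 2 := by
    rw [hpx]
    exact_mod_cast H4 h4
  have h2 : (2:ℤ) ∣ ((j.val : ℤ) - (i.val : ℤ)) := by omega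
  exact transport g hn hord x u i.val j.val (dvd_trans hgcd h2)

lemma zmod4_cases : ∀ a b : ZMod 4, a = b ∨ a = b + 1 ∨ a = b + 2 ∨ a = b + 3 := by decide

lemma shift_all {g : P ≃o P} {x u : P} (h : ShiftInv g x u) (i j : ZMod 4) :
    (XF g x i < u ↔ XF g x j < u) ∧ (u < XF g x i ↔ u < XF g x j) := by
  have step : ∀ a : ZMod 4, ((XF g x a < u ↔ XF g x (a+1) < u) ∧ (u < XF g x a ↔ u < XF g x (a+1))) := h
  rcases zmod4_cases j i with rfl | rfl | rfl | rfl
  · exact ⟨Iff.rfl, Iff.rfl⟩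
  · exact ⟨(step i).1, (step i).2⟩
  · have e : i + 1 + 1 = i + 2 := by ring
    refine ⟨((step i).1).trans (e ▸ (step (i+1)).1), ((step i).2).trans (e ▸ (step (i+1)).2)⟩
  · have e : i + 1 + 1 = i + 2 := by ring
    have e2 : i + 2 + 1 = i + 3 := by ring
    refine ⟨(((step i).1).trans (e ▸ (step (i+1)).1)).trans (e2 ▸ (step (i+2)).1),
      (((step i).2).trans (e ▸ (step (i+1)).2)).trans (e2 ▸ (step (i+2)).2)⟩

lemma shiftinv_orbit (hn : 0 < n) (hord : orderOf g = n) (x : P) (hpx : per g x = 4)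
    {z u : P} (hu : u ∈ orbit g z) (h : ShiftInv g x z) : ShiftInv g x u := by
  obtain ⟨k, rfl⟩ := (mem_orbit_iff g hn hord z u).mp hu
  set m := per g z * (k+1) - k with hm
  have hmk : (⇑g)^[m] ((⇑g)^[k] z) = z := by
    rw [← Function.iterate_add_apply, iter_eq_self]
    have hle : k ≤ per g z * (k+1) := by
      calc k ≤ k + 1 := Nat.le_succ k
      _ ≤ per g z * (k+1) := Nat.le_mul_of_pos_left _ (per_pos g hn hord z)
    rw [hm, Nat.sub_add_cancel hle]
    exact Dvd.intro _ rfl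
  intro i
  have t1 : ∀ a : ZMod 4, (XF g x a < (⇑g)^[k] z ↔ XF g x (a + (m : ZMod 4)) < z) := by
    intro a
    rw [← lt_iter_iff g m (u := XF g x a), hmk, iterX g hn hord x hpx]
  have t2 : ∀ a : ZMod 4, ((⇑g)^[k] z < XF g x a ↔ z < XF g x (a + (m : ZMod 4))) := by
    intro a
    rw [← lt_iter_iff g m (v := XF g x a), hmk, iterX g hn hord x hpx]
  constructor
  · rw [t1 i, t1 (i+1)]
    have e : i + 1 + (m : ZMod 4) = (i + m) + 1 := by ring
    rw [e]
    exact (shift_all h (i + m) ((i+m)+1)).1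
  · rw [t2 i, t2 (i+1)]
    have e : i + 1 + (m : ZMod 4) = (i + m) + 1 := by ring
    rw [e]
    exact (shift_all h (i + m) ((i+m)+1)).2

end CaseB
lemma parity_sub : ∀ c i : ZMod 4, c.val % 2 = 0 → (c - i).val % 2 = i.val % 2 := by decide

lemma two_ne_zero_zmod4 : (2 : ZMod 4) ≠ 0 := by decide

section CaseB2
variable (g : P ≃o P) {n : ℕ}

lemma caseB_build (hn : 0 < n) (hord : orderOf g = n)
    (hgen : ∀ φ : P ≃o P, ∃ m : ℤ, g ^ m = φ)
    (x y : P) (hpx : per g x = 4) (hpy : per g y = 4)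
    (hxy : y ∉ orbit g x)
    (huniq : ∀ u : P, 4 ∣ per g u → u ∈ orbit g x ∨ u ∈ orbit g y)
    (c s : ZMod 4)
    (hR : ∀ δ : ZMod 4, (x < XF g y δ ↔ x < XF g y (s - δ)))
    (hR' : ∀ ε : ZMod 4, (y < XF g x ε ↔ y < XF g x (-s - ε)))
    (hXP : c.val % 2 = 0 ∨ (∀ u : P, u ∉ orbit g x → u ∉ orbit g y → 2 ∣ per g u → ShiftInv g x u))
    (hYP : (c+s).val % 2 = 0 ∨ (∀ u : P, u ∉ orbit g x → u ∉ orbit g y → 2 ∣ per g u → ShiftInv g y u)) :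
    False := by
  classical
  have hdisj : ∀ i j : ZMod 4, XF g x i ≠ XF g y j := by
    intro i j h
    apply hxy
    have h1 : XF g y j ∈ orbit g y := (memX g hn hord y hpy _).mpr ⟨j, rfl⟩
    have h2 : XF g x i ∈ orbit g x := (memX g hn hord x hpx _).mpr ⟨i, rfl⟩
    have e1 := orbit_eq_of_mem g hn hord h1
    have e2 := orbit_eq_of_mem g hn hord h2
    rw [← e2, h, e1]
    exact self_mem_orbit g y
  set F : P → P := fun u =>
    if hx : ∃ i : ZMod 4, u = XF g x i then XF g x (c - Classical.choose hx)
    else if hy : ∃ j : ZMod 4, u = XF g y j then XF g y (c + s - Classical.choose hy)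
    else u with hF
  have FX : ∀ i : ZMod 4, F (XF g x i) = XF g x (c - i) := by
    intro i
    have hex : ∃ i' : ZMod 4, XF g x i = XF g x i' := ⟨i, rfl⟩
    have hch : Classical.choose hex = i :=
      (Xinj g hn hord x hpx (Classical.choose_spec hex)).symm
    rw [hF]
    simp only [dif_pos hex]
    rw [hch]
  have FY : ∀ j : ZMod 4, F (XF g y j) = XF g y (c + s - j) := by
    intro j
    have hnex : ¬ ∃ i : ZMod 4, XF g y j = XF g x i := by
      rintro ⟨i, h⟩; exact hdisj i j h.symm
    have hex : ∃ j' : ZMod 4, XF g y j = XF g y j' := ⟨j, rfl⟩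
    have hch : Classical.choose hex = j :=
      (Xinj g hn hord y hpy (Classical.choose_spec hex)).symm
    rw [hF]
    simp only [dif_neg hnex, dif_pos hex]
    rw [hch]
  have FO : ∀ u : P, u ∉ orbit g x → u ∉ orbit g y → F u = u := by
    intro u h1 h2
    have n1 : ¬ ∃ i : ZMod 4, u = XF g x i := by
      rw [← memX g hn hord x hpx]; exact h1
    have n2 : ¬ ∃ j : ZMod 4, u = XF g y j := by
      rw [← memX g hn hord y hpy]; exact h2
    rw [hF]
    simp only [dif_neg n1, dif_neg n2]
  have hinv : Function.Involutive F := by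
    intro u
    by_cases h1 : ∃ i : ZMod 4, u = XF g x i
    · obtain ⟨i, rfl⟩ := h1
      rw [FX, FX]
      congr 1
      ring
    by_cases h2 : ∃ j : ZMod 4, u = XF g y j
    · obtain ⟨j, rfl⟩ := h2
      rw [FY, FY]
      congr 1
      ring
    · have hox : u ∉ orbit g x := fun h => h1 ((memX g hn hord x hpx u).mp h)
      have hoy : u ∉ orbit g y := fun h => h2 ((memX g hn hord y hpy u).mp h)
      rw [FO u hox hoy, FO u hox hoy]
  -- order preservation for the "outside" interactions
  have side : ∀ (z : P), per g z = 4 → ∀ (v : P), v ∉ orbit g x → v ∉ orbit g y →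
      ∀ i i' : ZMod 4,
      (2 ∣ per g v → (i.val % 2 = i'.val % 2 ∨ ShiftInv g z v)) →
      ((XF g z i < v → XF g z i' < v) ∧ (v < XF g z i → v < XF g z i')) := by
    intro z hpz v hvx hvy i i' hcase
    have h4v : ¬ 4 ∣ per g v := by
      intro h4
      rcases huniq v h4 with h | h
      · exact hvx h
      · exact hvy h
    by_cases h2v : 2 ∣ per g v
    · rcases hcase h2v with hpar | hsi
      · have := par_transport g hn hord z v hpz h4v i i' hpar
        exact ⟨this.1.mp, this.2.mp⟩
      · have := shift_all hsi i i'
        exact ⟨this.1.mp, this.2.mp⟩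
    · have := free_transport g hn hord z v hpz h2v i i'
      exact ⟨this.1.mp, this.2.mp⟩
  have hmono : ∀ u v : P, u < v → F u < F v := by
    intro u v huv
    by_cases hux : ∃ i : ZMod 4, u = XF g x i
    · obtain ⟨i, rfl⟩ := hux
      by_cases hvx : ∃ j : ZMod 4, v = XF g x j
      · obtain ⟨j, rfl⟩ := hvx
        exact absurd huv (antiX g hn hord x i j)
      by_cases hvy : ∃ j : ZMod 4, v = XF g y j
      · obtain ⟨j, rfl⟩ := hvy
        rw [FX, FY]
        have h1 : x < XF g y (j - i) := (relXY g hn hord x y hpx hpy i j).mp huv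
        have h2 : x < XF g y (s - (j - i)) := (hR (j - i)).mp h1
        have h3 : (c + s - j) - (c - i) = s - (j - i) := by ring
        rw [relXY g hn hord x y hpx hpy, h3]
        exact h2
      · have hvox : v ∉ orbit g x := fun h => hvx ((memX g hn hord x hpx v).mp h)
        have hvoy : v ∉ orbit g y := fun h => hvy ((memX g hn hord y hpy v).mp h)
        rw [FX, FO v hvox hvoy]
        refine (side x hpx v hvox hvoy i (c - i) ?_).1 huv
        intro h2v
        exact hXP.imp (fun hc => (parity_sub c i hc).symm) (fun hsi => hsi v hvox hvoy h2v)
    by_cases huy : ∃ j : ZMod 4, u = XF g y j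
    · obtain ⟨j, rfl⟩ := huy
      by_cases hvy : ∃ j' : ZMod 4, v = XF g y j' 
      · obtain ⟨j', rfl⟩ := hvy
        exact absurd huv (antiX g hn hord y j j')
      by_cases hvx : ∃ i : ZMod 4, v = XF g x i
      · obtain ⟨i, rfl⟩ := hvx
        rw [FY, FX]
        have h1 : y < XF g x (i - j) := (relXY g hn hord y x hpy hpx j i).mp huv
        have h2 : y < XF g x (-s - (i - j)) := (hR' (i - j)).mp h1
        have h3 : (c - i) - (c + s - j) = -s - (i - j) := by ring
        rw [relXY g hn hord y x hpy hpx, h3]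
        exact h2
      · have hvox : v ∉ orbit g x := fun h => hvx ((memX g hn hord x hpx v).mp h)
        have hvoy : v ∉ orbit g y := fun h => hvy ((memX g hn hord y hpy v).mp h)
        rw [FY, FO v hvox hvoy]
        refine (side y hpy v hvox hvoy j (c + s - j) ?_).1 huv
        intro h2v
        exact hYP.imp (fun hc => (parity_sub (c+s) j hc).symm) (fun hsi => hsi v hvox hvoy h2v)
    · have huox : u ∉ orbit g x := fun h => hux ((memX g hn hord x hpx u).mp h)
      have huoy : u ∉ orbit g y := fun h => huy ((memX g hn hord y hpy u).mp h)
      rw [FO u huox huoy]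
      by_cases hvx : ∃ j : ZMod 4, v = XF g x j
      · obtain ⟨j, rfl⟩ := hvx
        rw [FX]
        refine (side x hpx u huox huoy j (c - j) ?_).2 huv
        intro h2v
        exact hXP.imp (fun hc => (parity_sub c j hc).symm) (fun hsi => hsi u huox huoy h2v)
      by_cases hvy : ∃ j : ZMod 4, v = XF g y j
      · obtain ⟨j, rfl⟩ := hvy
        rw [FY]
        refine (side y hpy u huox huoy j (c + s - j) ?_).2 huv
        intro h2v
        exact hYP.imp (fun hc => (parity_sub (c+s) j hc).symm) (fun hsi => hsi u huox huoy h2v)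
      · have hvox : v ∉ orbit g x := fun h => hvx ((memX g hn hord x hpx v).mp h)
        have hvoy : v ∉ orbit g y := fun h => hvy ((memX g hn hord y hpy v).mp h)
        rw [FO v hvox hvoy]
        exact huv
  obtain ⟨φ, hφ⟩ := exists_iso F hinv hmono
  obtain ⟨k, hk⟩ := gen_iterate g hn hord hgen φ
  rw [hφ] at hk
  have e0 : XF g x ((0:ZMod 4) + (k : ZMod 4)) = XF g x (c - 0) := by
    rw [← iterX g hn hord x hpx, ← FX, hk]
  have hkc : (k : ZMod 4) = c := by
    have := Xinj g hn hord x hpx e0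
    simpa using this
  have e1 : XF g x ((1:ZMod 4) + (k : ZMod 4)) = XF g x (c - 1) := by
    rw [← iterX g hn hord x hpx, ← FX, hk]
  have h1 : (1 : ZMod 4) + c = c - 1 := by
    have := Xinj g hn hord x hpx e1
    rwa [hkc] at this
  have h2 : (2 : ZMod 4) = 0 := by linear_combination h1
  exact two_ne_zero_zmod4 h2

end CaseB2
lemma factS : ∀ S : Finset (ZMod 4), ∃ s : ZMod 4,
    (∀ δ, (δ ∈ S ↔ s - δ ∈ S)) ∧
    (s.val % 2 = 0 ∨ ((∃ r, r ∈ S ∧ r + 1 ∈ S) ∧ ∀ v, ¬(v ∈ S ∧ v + 2 ∈ S))) := by decide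

lemma par2 : ∀ a : ZMod 4, a.val % 2 = (a+2).val % 2 := by decide
lemma parity_opp : ∀ a cc : ZMod 4, a.val % 2 = cc.val % 2 ∨ (a+3).val % 2 = cc.val % 2 := by
  decide
lemma zero_val_even : ((0 : ZMod 4)).val % 2 = 0 := by decide

lemma extract {Q : ZMod 4 → Prop} (hpar : ∀ a, Q a ↔ Q (a+2)) {i : ZMod 4}
    (h : ¬(Q i ↔ Q (i+1))) : ∃ a, Q a ∧ ¬ Q (a+1) := by
  by_cases hQ : Q i
  · exact ⟨i, hQ, fun h2 => h ⟨fun _ => h2, fun _ => hQ⟩⟩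
  · have h1 : Q (i+1) := by
      by_contra h2
      exact h ⟨fun a => absurd a hQ, fun a => absurd a h2⟩
    refine ⟨i+1, h1, ?_⟩
    have e : i + 1 + 1 = i + 2 := by ring
    rw [e]
    intro h2
    exact hQ ((hpar i).mpr h2)

section CaseB3
variable (g : P ≃o P) {n : ℕ}

lemma hX0 (x : P) : XF g x 0 = x := by simp [XF]

lemma caseB_half (hn : 0 < n) (hord : orderOf g = n)
    (hgen : ∀ φ : P ≃o P, ∃ m : ℤ, g ^ m = φ)
    (x y : P) (hpx : per g x = 4) (hpy : per g y = 4)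
    (hxy : y ∉ orbit g x)
    (huniq : ∀ u : P, 4 ∣ per g u → u ∈ orbit g x ∨ u ∈ orbit g y)
    (hbeta : ∀ u v : P, 2 ∣ per g u → ¬ 4 ∣ per g u → 2 ∣ per g v → ¬ 4 ∣ per g v →
      u ∈ orbit g v)
    (hR'e : ∀ ε : ZMod 4, ¬ y < XF g x ε) : False := by
  classical
  set S : Finset (ZMod 4) := Finset.univ.filter (fun δ => x < XF g y δ) with hS
  have hmemS : ∀ δ, δ ∈ S ↔ x < XF g y δ := by
    intro δ; simp [hS]
  obtain ⟨s, hs1, hs2⟩ := factS S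
  have hR : ∀ δ : ZMod 4, (x < XF g y δ ↔ x < XF g y (s - δ)) := by
    intro δ
    rw [← hmemS, ← hmemS]
    exact hs1 δ
  have hR' : ∀ ε : ZMod 4, (y < XF g x ε ↔ y < XF g x (-s - ε)) :=
    fun ε => iff_of_false (hR'e ε) (hR'e _)
  rcases hs2 with hsev | ⟨⟨r, hr1, hr2⟩, hnoanti⟩
  · exact caseB_build g hn hord hgen x y hpx hpy hxy huniq 0 s hR hR'
      (Or.inl zero_val_even) (Or.inl (by rw [zero_add]; exact hsev))
  · have hr1x : x < XF g y r := (hmemS r).mp hr1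
    have hr2x : x < XF g y (r+1) := (hmemS (r+1)).mp hr2
    have hnoantix : ∀ v : ZMod 4, ¬ (x < XF g y v ∧ x < XF g y (v+2)) := by
      intro v hv
      exact hnoanti v ⟨(hmemS v).mpr hv.1, (hmemS (v+2)).mpr hv.2⟩
    by_cases hall : ∀ u : P, u ∉ orbit g x → u ∉ orbit g y → 2 ∣ per g u → ShiftInv g y u
    · exact caseB_build g hn hord hgen x y hpx hpy hxy huniq 0 s hR hR'
        (Or.inl zero_val_even) (Or.inr hall)
    · push_neg at hall
      obtain ⟨u₀, hu₀x, hu₀y, h2u₀, hnsy⟩ := hall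
      have h4u₀ : ¬ 4 ∣ per g u₀ := by
        intro h4
        rcases huniq u₀ h4 with h | h
        · exact hu₀x h
        · exact hu₀y h
      have parX := fun i j hp => par_transport g hn hord x u₀ hpx h4u₀ i j hp
      have parY := fun i j hp => par_transport g hn hord y u₀ hpy h4u₀ i j hp
      have relxy := relXY g hn hord x y hpx hpy
      have hsx₀ : ShiftInv g x u₀ := by
        by_contra hnsx
        obtain ⟨i, hi⟩ := not_forall.mp hnsx
        -- helper : ∃ true instance lemmas
        have exY_up : (∃ j : ZMod 4, ¬(u₀ < XF g y j ↔ u₀ < XF g y (j+1))) ∨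
            (∃ j : ZMod 4, ¬(XF g y j < u₀ ↔ XF g y (j+1) < u₀)) := by
          obtain ⟨j, hj⟩ := not_forall.mp hnsy
          rcases not_and_or.mp hj with h | h
          · exact Or.inr ⟨j, h⟩
          · exact Or.inl ⟨j, h⟩
        rcases not_and_or.mp hi with hA | hB
        · -- X _ < u₀ pattern differs
          obtain ⟨i₀, hio, hin⟩ := extract
            (fun a => (parX a (a+2) (par2 a)).1) hA
          have hio2 : XF g x (i₀+2) < u₀ := (parX i₀ (i₀+2) (par2 i₀)).1.mp hio
          have hin3 : ¬ XF g x (i₀+3) < u₀ := by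
            intro h
            exact hin ((parX (i₀+3) (i₀+1) (by
              have := par2 (i₀+1)
              have e : i₀ + 1 + 2 = i₀ + 3 := by ring
              rw [e] at this
              omega)).1.mp h)
          have hpfact : ∀ b : ZMod 4, b.val % 2 = (i₀+1).val % 2 → ¬ XF g x b < u₀ :=
            fun b hb h => hin ((parX b (i₀+1) hb).1.mp h)
          rcases exY_up with ⟨j, hj⟩ | ⟨j, hj⟩
          · -- some u₀ < Y j'
            have hex : u₀ < XF g y j ∨ u₀ < XF g y (j+1) := by
              by_contra hcc
              push_neg at hcc
              exact hj (iff_of_false hcc.1 hcc.2)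
            obtain ⟨j', hj'⟩ : ∃ j', u₀ < XF g y j' := by
              rcases hex with h | h
              · exact ⟨j, h⟩
              · exact ⟨j+1, h⟩
            -- compose to get antipodal pair
            have c1 : XF g x i₀ < XF g y j' := lt_trans hio hj'
            have c2 : XF g x (i₀+2) < XF g y j' := lt_trans hio2 hj'
            have d1 : x < XF g y (j' - i₀) := (relxy i₀ j').mp c1
            have d2 : x < XF g y (j' - (i₀+2)) := (relxy (i₀+2) j').mp c2
            refine hnoantix (j' - (i₀ + 2)) ⟨d2, ?_⟩
            have e : j' - (i₀+2) + 2 = j' - i₀ := by ring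
            rw [e]
            exact d1
          · -- some Y j' < u₀
            have hex : XF g y j < u₀ ∨ XF g y (j+1) < u₀ := by
              by_contra hcc
              push_neg at hcc
              exact hj (iff_of_false hcc.1 hcc.2)
            obtain ⟨j', hj'⟩ : ∃ j', XF g y j' < u₀ := by
              rcases hex with h | h
              · exact ⟨j, h⟩
              · exact ⟨j+1, h⟩
            have c1 : XF g x (j' - r) < XF g y j' := by
              rw [relxy]
              have e : j' - (j' - r) = r := by ring
              rw [e]
              exact hr1x
            have c2 : XF g x (j' - r + 3) < XF g y j' := by
              rw [relxy]
              have h40 : (4 : ZMod 4) = 0 := by decide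
              have e : j' - (j' - r + 3) = r + 1 := by linear_combination -h40
              rw [e]
              exact hr2x
            have t1 : XF g x (j' - r) < u₀ := lt_trans c1 hj'
            have t2 : XF g x (j' - r + 3) < u₀ := lt_trans c2 hj'
            rcases parity_opp (j' - r) (i₀ + 1) with hp | hp
            · exact hpfact _ hp t1
            · exact hpfact _ hp t2
        · -- u₀ < X _ pattern differs : full relation to Y, contradiction
          obtain ⟨i₀, hio, hin⟩ := extract
            (fun a => (parX a (a+2) (par2 a)).2) hB
          have hio2 : u₀ < XF g x (i₀+2) := (parX i₀ (i₀+2) (par2 i₀)).2.mp hio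
          have full : ∀ j : ZMod 4, u₀ < XF g y j := by
            intro j
            rcases zmod4_cases j (i₀ + r) with e | e | e | e
            · refine lt_trans hio ?_
              rw [relxy]
              have e2 : j - i₀ = r := by rw [e]; ring
              rw [e2]; exact hr1x
            · refine lt_trans hio ?_
              rw [relxy]
              have e2 : j - i₀ = r + 1 := by rw [e]; ring
              rw [e2]; exact hr2x
            · refine lt_trans hio2 ?_
              rw [relxy]
              have e2 : j - (i₀+2) = r := by rw [e]; ring
              rw [e2]; exact hr1x
            · refine lt_trans hio2 ?_
              rw [relxy]
              have e2 : j - (i₀+2) = r + 1 := by rw [e]; ring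
              rw [e2]; exact hr2x
          rcases exY_up with ⟨j, hj⟩ | ⟨j, hj⟩
          · exact hj ⟨fun _ => full (j+1), fun _ => full j⟩
          · have hex : XF g y j < u₀ ∨ XF g y (j+1) < u₀ := by
              by_contra hcc
              push_neg at hcc
              exact hj (iff_of_false hcc.1 hcc.2)
            rcases hex with h | h
            · exact lt_asymm (full j) h
            · exact lt_asymm (full (j+1)) h
      have hallx : ∀ u : P, u ∉ orbit g x → u ∉ orbit g y → 2 ∣ per g u → ShiftInv g x u := by
        intro u hux huy h2u
        have h4u : ¬ 4 ∣ per g u := by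
          intro h4
          rcases huniq u h4 with h | h
          · exact hux h
          · exact huy h
        exact shiftinv_orbit g hn hord x hpx (hbeta u u₀ h2u h4u h2u₀ h4u₀) hsx₀
      refine caseB_build g hn hord hgen x y hpx hpy hxy huniq (-s) s hR hR'
        (Or.inr hallx) (Or.inl ?_)
      rw [neg_add_cancel]
      exact zero_val_even

lemma caseB (hn : 0 < n) (hord : orderOf g = n)
    (hgen : ∀ φ : P ≃o P, ∃ m : ℤ, g ^ m = φ)
    (x y : P) (hpx : per g x = 4) (hpy : per g y = 4)
    (hxy : y ∉ orbit g x)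
    (huniq : ∀ u : P, 4 ∣ per g u → u ∈ orbit g x ∨ u ∈ orbit g y)
    (hbeta : ∀ u v : P, 2 ∣ per g u → ¬ 4 ∣ per g u → 2 ∣ per g v → ¬ 4 ∣ per g v →
      u ∈ orbit g v) : False := by
  have hyx : x ∉ orbit g y := by
    intro h
    apply hxy
    rw [orbit_eq_of_mem g hn hord h]
    exact self_mem_orbit g y
  by_cases hc : ∀ ε : ZMod 4, ¬ y < XF g x ε
  · exact caseB_half g hn hord hgen x y hpx hpy hxy huniq hbeta hc
  · push_neg at hc
    obtain ⟨ε, hε⟩ := hc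
    have hRe : ∀ δ : ZMod 4, ¬ x < XF g y δ := by
      intro δ hδ
      have h1 : XF g y δ < XF g x (ε + δ) := by
        rw [relXY g hn hord y x hpy hpx]
        have e : ε + δ - δ = ε := by ring
        rw [e]
        exact hε
      have h2 : x < XF g x (ε + δ) := lt_trans hδ h1
      rw [← hX0 g x] at h2
      exact antiX g hn hord x 0 (ε + δ) h2
    exact caseB_half g hn hord hgen y x hpy hpx hyx
      (fun u h => (huniq u h).symm) hbeta hRe

end CaseB3
section Exist
variable (g : P ≃o P) {n : ℕ}

lemma pow_eq_one_of_all_fixed (hn : 0 < n) (hord : orderOf g = n) {m : ℕ}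
    (h : ∀ x : P, per g x ∣ m) : g ^ m = 1 := by
  have : ∀ x : P, (⇑(g ^ m)) x = x := by
    intro x
    rw [coe_pow]
    exact (iter_eq_self g x).mpr (h x)
  ext x
  exact this x

lemma exists_4orbit (hn : 0 < n) (hord : orderOf g = n) (h4 : 4 ∣ n) (h8 : ¬ 8 ∣ n) :
    ∃ x : P, 4 ∣ per g x := by
  by_contra hcon
  push_neg at hcon
  have hdvd : ∀ x : P, per g x ∣ n / 2 := by
    intro x
    exact H1 (per_pos g hn hord x).ne' hn.ne' (per_dvd g hn hord x) (hcon x) h4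
  have h1 : g ^ (n / 2) = 1 := pow_eq_one_of_all_fixed g hn hord hdvd
  have h2 : orderOf g ∣ n / 2 := orderOf_dvd_of_pow_eq_one h1
  rw [hord] at h2
  have hn4 : 4 ≤ n := Nat.le_of_dvd hn h4
  have := Nat.le_of_dvd (by omega) h2
  omega

lemma exists_2orbit (hn : 0 < n) (hord : orderOf g = n) (h2 : 2 ∣ n) (h4 : ¬ 4 ∣ n) :
    ∃ x : P, 2 ∣ per g x ∧ ¬ 4 ∣ per g x := by
  by_contra hcon
  push_neg at hcon
  have hdvd : ∀ x : P, per g x ∣ n / 2 := by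
    intro x
    by_cases h2x : 2 ∣ per g x
    · exact absurd (dvd_trans (hcon x h2x) (per_dvd g hn hord x)) h4
    · exact H3 h2x (per_dvd g hn hord x) h2
  have h1 : g ^ (n / 2) = 1 := pow_eq_one_of_all_fixed g hn hord hdvd
  have h2' : orderOf g ∣ n / 2 := orderOf_dvd_of_pow_eq_one h1
  rw [hord] at h2'
  have hn2 : 2 ≤ n := Nat.le_of_dvd hn h2
  have := Nat.le_of_dvd (by omega) h2'
  omega

end Exist
end AuxWSG

open AuxWSG

/-- (Theorem 4.1, second case.) Let `P` be a finite poset with `Aut(P)` cyclic of order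
`n ≥ 1` generated by `g`, and suppose `3 ∦ n`. If `q ∈ {2,4}` exactly divides `n`, then
`Σ_{α ∈ g} w_q(α) ≥ b(q)`. -/
theorem weight_sum_ge_b_two_four (n : ℕ) (hn : 1 ≤ n)
    (P : Type) [PartialOrder P] [Fintype P] (g : P ≃o P)
    (hord : orderOf g = n) (hgen : ∀ φ : P ≃o P, ∃ m : ℤ, g ^ m = φ)
    (h3 : ¬ ExactDvd 3 n)
    (q : ℕ) (hq24 : q = 2 ∨ q = 4) (hq : ExactDvd q n) :
    (b q : ℚ) ≤ ∑ᶠ A ∈ cycles g, w n A.ncard q := by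
  classical
  have hn0 : 0 < n := hn
  have hfin : (cycles g ∩ Function.support (fun A : Set P => w n A.ncard q)).Finite :=
    Set.toFinite _
  rw [finsum_mem_eq_sum _ hfin]
  have hmemT : ∀ A : Set P, A ∈ hfin.toFinset ↔ (A ∈ cycles g ∧ w n A.ncard q ≠ 0) := by
    intro A
    rw [Set.Finite.mem_toFinset]
    rfl
  have hnonneg : ∀ A ∈ hfin.toFinset, 0 ≤ w n A.ncard q := fun A _ => w_nonneg n A.ncard q
  rcases hq24 with rfl | rfl
  · -- q = 2
    have hb : (b 2 : ℚ) = 1 := by norm_num [b]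
    rw [hb]
    obtain ⟨h2n, h4n⟩ := (exact2_iff n).mp hq
    obtain ⟨x, h2x, h4x⟩ := exists_2orbit g hn0 hord h2n h4n
    have hppos := per_pos g hn0 hord x
    have hper2 : 2 ≤ per g x := by
      rcases h2x with ⟨c, hc⟩; omega
    have hncard : (orbit g x).ncard = per g x := orbit_ncard g hn0 hord x
    have hwge : 1 ≤ w n (orbit g x).ncard 2 := by
      rw [hncard]
      exact w_two_ge h3 hq h2x h4x hper2
    have hmem : orbit g x ∈ hfin.toFinset := by
      rw [hmemT]
      refine ⟨⟨⟨x, rfl⟩, by rw [hncard]; exact hper2⟩, ?_⟩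
      intro h0
      rw [h0] at hwge
      norm_num at hwge
    calc (1:ℚ) ≤ w n (orbit g x).ncard 2 := hwge
    _ ≤ ∑ A ∈ hfin.toFinset, w n A.ncard 2 := Finset.single_le_sum hnonneg hmem
  · -- q = 4
    have hb : (b 4 : ℚ) = 3 := by norm_num [b]
    rw [hb]
    obtain ⟨h4n, h8n⟩ := (exact4_iff n).mp hq
    have hnot2 : ¬ ExactDvd 2 n := by
      rw [exact2_iff]
      rintro ⟨-, hno4⟩
      exact hno4 h4n
    by_contra hcon
    push_neg at hcon
    -- generic membership of orbits in the sum's index set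
    have horbmem : ∀ u : P, 2 ∣ per g u → orbit g u ∈ hfin.toFinset ∧
        (orbit g u).ncard = per g u := by
      intro u h2u
      have hncard : (orbit g u).ncard = per g u := orbit_ncard g hn0 hord u
      have hppos := per_pos g hn0 hord u
      have hper2 : 2 ≤ per g u := by rcases h2u with ⟨c, hc⟩; omega
      have h8u : ¬ 8 ∣ per g u := fun h8 => h8n (dvd_trans h8 (per_dvd g hn0 hord u))
      have hwpos : (0:ℚ) < w n (per g u) 4 := by
        by_cases h4u : 4 ∣ per g u
        · have := (w_four_ge_one (l := per g u) h3 hnot2 h4u h8u).1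
          linarith
        · have := w_four_ge_half (l := per g u) h3 hnot2 h2u h4u hper2
          linarith
      refine ⟨?_, hncard⟩
      rw [hmemT]
      refine ⟨⟨⟨u, rfl⟩, by rw [hncard]; exact hper2⟩, ?_⟩
      rw [hncard]
      exact hwpos.ne'
    -- the two filtered families
    set C4 : Finset (Set P) := hfin.toFinset.filter (fun A => 4 ∣ A.ncard) with hC4
    set C2 : Finset (Set P) := hfin.toFinset.filter
      (fun A => 2 ∣ A.ncard ∧ ¬ 4 ∣ A.ncard) with hC2
    -- every element of C4 has weight ≥ 1 ; of C2 weight ≥ 1/2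
    have hw4 : ∀ A ∈ C4, 1 ≤ w n A.ncard 4 ∧ (w n A.ncard 4 < 2 → A.ncard = 4) := by
      intro A hA
      rw [hC4, Finset.mem_filter] at hA
      obtain ⟨hAt, h4A⟩ := hA
      obtain ⟨⟨⟨xx, rfl⟩, -⟩, -⟩ := (hmemT A).mp hAt
      have hncard : (orbit g xx).ncard = per g xx := orbit_ncard g hn0 hord xx
      rw [hncard] at h4A ⊢
      have h8u : ¬ 8 ∣ per g xx := fun h8 => h8n (dvd_trans h8 (per_dvd g hn0 hord xx))
      exact w_four_ge_one h3 hnot2 h4A h8u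
    have hw2 : ∀ A ∈ C2, (1/2 : ℚ) ≤ w n A.ncard 4 := by
      intro A hA
      rw [hC2, Finset.mem_filter] at hA
      obtain ⟨hAt, h2A, h4A⟩ := hA
      obtain ⟨⟨⟨xx, rfl⟩, hcard2⟩, -⟩ := (hmemT A).mp hAt
      exact w_four_ge_half h3 hnot2 h2A h4A hcard2
    -- sum bound
    have hdisj : Disjoint C4 C2 := by
      rw [Finset.disjoint_left]
      intro A hA hA2
      rw [hC4, Finset.mem_filter] at hA
      rw [hC2, Finset.mem_filter] at hA2
      exact hA2.2.2 hA.2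
    have hsub : C4 ∪ C2 ⊆ hfin.toFinset := by
      intro A hA
      rcases Finset.mem_union.mp hA with h | h
      · exact Finset.mem_of_mem_filter A h
      · exact Finset.mem_of_mem_filter A h
    have hsum1 : ∑ A ∈ C4 ∪ C2, w n A.ncard 4 ≤ ∑ A ∈ hfin.toFinset, w n A.ncard 4 :=
      Finset.sum_le_sum_of_subset_of_nonneg hsub (fun A _ _ => w_nonneg n A.ncard 4)
    have hsum2 : ∑ A ∈ C4 ∪ C2, w n A.ncard 4
        = ∑ A ∈ C4, w n A.ncard 4 + ∑ A ∈ C2, w n A.ncard 4 :=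
      Finset.sum_union hdisj
    have hsumC4 : (C4.card : ℚ) ≤ ∑ A ∈ C4, w n A.ncard 4 := by
      have := Finset.card_nsmul_le_sum C4 _ 1 (fun A hA => (hw4 A hA).1)
      simpa using this
    have hsumC2 : (C2.card : ℚ) * (1/2) ≤ ∑ A ∈ C2, w n A.ncard 4 := by
      have := Finset.card_nsmul_le_sum C2 _ (1/2 : ℚ) hw2
      simpa [nsmul_eq_mul] using this
    have htot : (C4.card : ℚ) + (C2.card : ℚ) * (1/2) < 3 := by linarith
    have hcards : 2 * C4.card + C2.card ≤ 5 := by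
      have h6 : (2 * C4.card + C2.card : ℚ) < 6 := by push_cast; linarith
      by_contra hc
      push_neg at hc
      have : (6 : ℚ) ≤ (2 * C4.card + C2.card : ℚ) := by exact_mod_cast hc
      linarith
    -- C4 is nonempty
    obtain ⟨x₀, h4x₀⟩ := exists_4orbit g hn0 hord h4n h8n
    have hx₀mem : orbit g x₀ ∈ C4 := by
      obtain ⟨hm, hc⟩ := horbmem x₀ (dvd_trans ⟨2, rfl⟩ h4x₀)
      rw [hC4, Finset.mem_filter]
      exact ⟨hm, by rw [hc]; exact h4x₀⟩
    have hC4pos : 1 ≤ C4.card := Finset.card_pos.mpr ⟨_, hx₀mem⟩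
    -- orbit of any 4-divisible point is in C4
    have horb4 : ∀ u : P, 4 ∣ per g u → orbit g u ∈ C4 := by
      intro u h4u
      obtain ⟨hm, hc⟩ := horbmem u (dvd_trans ⟨2, rfl⟩ h4u)
      rw [hC4, Finset.mem_filter]
      exact ⟨hm, by rw [hc]; exact h4u⟩
    have hCcases : C4.card = 1 ∨ C4.card = 2 := by omega
    rcases hCcases with hCc | hCc
    · -- C4.card = 1
      obtain ⟨A, hAeq⟩ := Finset.card_eq_one.mp hCc
      have hxA : orbit g x₀ = A := by
        have := hx₀mem
        rw [hAeq, Finset.mem_singleton] at this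
        exact this
      refine caseA g hn0 hord hgen x₀ h4x₀ ?_
      intro u h4u
      have : orbit g u = A := by
        have := horb4 u h4u
        rw [hAeq, Finset.mem_singleton] at this
        exact this
      rw [← hxA] at this
      rw [← this]
      exact self_mem_orbit g u
    · -- C4.card = 2
      have hC2le : C2.card ≤ 1 := by omega
      obtain ⟨A, B, hAB, hC4eq⟩ := Finset.card_eq_two.mp hCc
      have hAmem : A ∈ C4 := by rw [hC4eq]; simp
      have hBmem : B ∈ C4 := by rw [hC4eq]; simp
      -- both weights < 2
      have hsumC4eq : ∑ A' ∈ C4, w n A'.ncard 4 = w n A.ncard 4 + w n B.ncard 4 := by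
        rw [hC4eq]
        exact Finset.sum_pair hAB
      have hC2nonneg : (0:ℚ) ≤ ∑ A' ∈ C2, w n A'.ncard 4 :=
        Finset.sum_nonneg (fun A' _ => w_nonneg n A'.ncard 4)
      have hwA2 : w n A.ncard 4 < 2 := by
        have h1 := (hw4 B hBmem).1
        by_contra hc
        push_neg at hc
        linarith
      have hwB2 : w n B.ncard 4 < 2 := by
        have h1 := (hw4 A hAmem).1
        by_contra hc
        push_neg at hc
        linarith
      have hA4 : A.ncard = 4 := (hw4 A hAmem).2 hwA2
      have hB4 : B.ncard = 4 := (hw4 B hBmem).2 hwB2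
      -- base points
      obtain ⟨⟨⟨x, rfl⟩, -⟩, -⟩ := (hmemT A).mp (Finset.mem_of_mem_filter A hAmem)
      obtain ⟨⟨⟨y, rfl⟩, -⟩, -⟩ := (hmemT B).mp (Finset.mem_of_mem_filter B hBmem)
      have hpx : per g x = 4 := by rw [← orbit_ncard g hn0 hord x]; exact hA4
      have hpy : per g y = 4 := by rw [← orbit_ncard g hn0 hord y]; exact hB4
      have hxy : y ∉ orbit g x := by
        intro hmem
        exact hAB (by rw [← orbit_eq_of_mem g hn0 hord hmem])
      refine caseB g hn0 hord hgen x y hpx hpy hxy ?_ ?_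
      · intro u h4u
        have := horb4 u h4u
        rw [hC4eq, Finset.mem_insert, Finset.mem_singleton] at this
        rcases this with h | h
        · left; rw [← h]; exact self_mem_orbit g u
        · right; rw [← h]; exact self_mem_orbit g u
      · intro u v h2u h4u h2v h4v
        have hmu : orbit g u ∈ C2 := by
          obtain ⟨hm, hc⟩ := horbmem u h2u
          rw [hC2, Finset.mem_filter]
          exact ⟨hm, by rw [hc]; exact ⟨h2u, h4u⟩⟩
        have hmv : orbit g v ∈ C2 := by
          obtain ⟨hm, hc⟩ := horbmem v h2v
          rw [hC2, Finset.mem_filter]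
          exact ⟨hm, by rw [hc]; exact ⟨h2v, h4v⟩⟩
        have : orbit g u = orbit g v := Finset.card_le_one.mp hC2le _ hmu _ hmv
        rw [← this]
        exact self_mem_orbit g u
end
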